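/- arXiv:1301.4624 — 7 statements merged into one kernel-verified Lean document; each statement's English description precedes it below -/
import Mathlib

section
/- Fix a non-compact well-ordered space J. Let X be a J-convergence space and q : X → Y a quotient map. Then for any topological space Z, the map q × id : X ×_J Z → Y ×_J Z is a quotient map. -/
open Set Topology TopologicalSpace

universe u v w

/-- The order topology on `WithTop α`; for a noncompact well-ordered `α` with the order
topology, `WithTop α` with this topology is the one-point (Alexandroff) compactification
`α ∪ {∞_α}`, in which `⊤ = ∞_α` is the maximum. -/
noncomputable instance withTopOrderTopology {α : Type*} [Preorder α] :
    TopologicalSpace (WithTop α) := Preorder.topology _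

/-- `I` is almost closed in the ordered topological space `S`:
`closure I \ I = {ℓ}` where `ℓ = min {s ∈ S | I < s}`. -/
def AlmostClosedIn {S : Type*} [LinearOrder S] [TopologicalSpace S] (I : Set S) : Prop :=
  ∃ ℓ : S, closure I \ I = {ℓ} ∧ IsLeast {s : S | ∀ i ∈ I, i < s} ℓ

/-- `I ⊆ J` is almost closed in `J ∪ {∞_J}` (modeled as `WithTop J` with the order topology). -/
def AlmostClosed {J : Type*} [LinearOrder J] (I : Set J) : Prop :=
  AlmostClosedIn ((fun j : J => (j : WithTop J)) '' I)

/-- A subset `C ⊆ X` is `J`-closed: for every almost closed `I ⊆ J` and continuous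
`f : I ∪ {∞_I} → X` (where `I ∪ {∞_I} = WithTop ↥I` is the one-point compactification of
`I` with its internal order topology) with `f(I) ⊆ C` one has `f(∞_I) ∈ C`. -/
def JClosedSet (J : Type v) [LinearOrder J] (X : Type u) [TopologicalSpace X] (C : Set X) : Prop :=
  ∀ I : Set J, AlmostClosed I → ∀ f : WithTop ↥I → X, Continuous f →
    (∀ i : ↥I, f (WithTop.some i) ∈ C) → f ⊤ ∈ C

/-- `U ⊆ X` is `J`-open iff its complement is `J`-closed. -/
def JOpenSet (J : Type v) [LinearOrder J] (X : Type u) [TopologicalSpace X] (U : Set X) : Prop :=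
  JClosedSet J X Uᶜ

/-- `X` is a `J`-convergence space. -/
def IsJConvergence (J : Type v) [LinearOrder J] (X : Type u) [TopologicalSpace X] : Prop :=
  ∀ A : Set X, ¬ IsClosed A →
    ∃ I : Set J, AlmostClosed I ∧ ∃ f : WithTop ↥I → X, Continuous f ∧
      (∀ i : ↥I, f (WithTop.some i) ∈ A) ∧ f ⊤ ∉ A

/-- `JX`: the topology of `J`-open sets. -/
noncomputable def jTop (J : Type v) [LinearOrder J] (X : Type u) [tX : TopologicalSpace X] :
    TopologicalSpace X := generateFrom {U : Set X | JOpenSet J X U}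

/-- `K` is a compact Hausdorff witness for the failure of `A` to be closed. -/
def CGWitness (K : Type v) [tK : TopologicalSpace K] (X : Type u) [TopologicalSpace X]
    (A : Set X) : Prop :=
  CompactSpace K ∧ T2Space K ∧ ∃ f : K → X, Continuous f ∧ ¬ IsClosed (f ⁻¹' A)

/-- `X` is compactly generated. -/
def CompactlyGen.{v', u'} (X : Type u') [TopologicalSpace X] : Prop :=
  ∀ A : Set X, ¬ IsClosed A → ∃ (K : Type v') (tK : TopologicalSpace K), @CGWitness K tK X _ A

/-- `kX`: `U` is open iff `f ⁻¹ U` is open for every continuous map from a compact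
Hausdorff space. -/
def kTop.{v', u'} (X : Type u') [tX : TopologicalSpace X] : TopologicalSpace X :=
  generateFrom {U : Set X |
    ∀ (K : Type v') (tK : TopologicalSpace K), @CompactSpace K tK → @T2Space K tK →
      ∀ f : K → X, Continuous[tK, tX] f → IsOpen[tK] (f ⁻¹' U)}

/-- The directed topology on the successor `J' ∪ {∞} = WithTop J'`: generated by singletons
`{j}` and final segments `(j, ∞]` for `j ∈ J'`. -/
def directedTopology (J' : Type*) [Preorder J'] : TopologicalSpace (WithTop J') :=
  generateFrom {s : Set (WithTop J') |
    (∃ j : J', s = {WithTop.some j}) ∨ ∃ j : J', s = Ioi (WithTop.some j)}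

/-- `J'` witnesses transfinite convergence into `A`. -/
def TransfiniteWitness (J' : Type v) [LinearOrder J'] (X : Type u) [TopologicalSpace X]
    (A : Set X) : Prop :=
  WellFoundedLT J' ∧ Nonempty J' ∧ NoMaxOrder J' ∧
    ∃ f : WithTop J' → X, Continuous[directedTopology J', _] f ∧
      (∀ j : J', f (WithTop.some j) ∈ A) ∧ f ⊤ ∉ A

/-- `X` is a transfinite sequential space. -/
def TransfiniteSequential.{v', u'} (X : Type u') [TopologicalSpace X] : Prop :=
  ∀ A : Set X, ¬ IsClosed A →
    ∃ (J' : Type v') (lo : LinearOrder J'), @TransfiniteWitness J' lo X _ A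

/-- `X` is a `J`-unique convergence space. -/
def JUnique (J : Type v) [LinearOrder J] (X : Type u) [TopologicalSpace X] : Prop :=
  ∀ I : Set J, AlmostClosed I → ∀ f g : WithTop ↥I → X, Continuous f → Continuous g →
    (∀ i : ↥I, f (WithTop.some i) = g (WithTop.some i)) → f = g

/-- The set `M(X,Y)` of continuous maps between spaces with explicitly given topologies. -/
def Cts (X : Type u) (Y : Type w) (tX : TopologicalSpace X) (tY : TopologicalSpace Y) :=
  {f : X → Y // Continuous[tX, tY] f}

/-- The `𝒥`-open topology on `M(X,Y)`, generated by the sets `W(t,U)`. -/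
noncomputable def mjTop (J : Type v) [LinearOrder J] {X : Type u} {Y : Type w}
    (tX : TopologicalSpace X) (tY : TopologicalSpace Y) :
    TopologicalSpace (Cts X Y tX tY) :=
  generateFrom {W : Set (Cts X Y tX tY) |
    ∃ I : Set J, AlmostClosed I ∧ ∃ t : WithTop ↥I → X, Continuous[_, tX] t ∧
      ∃ U : Set Y, IsOpen[tY] U ∧ W = {f | ∀ z : WithTop ↥I, f.1 (t z) ∈ U}}

/-!
The heart of the proof is that the probe domains `I ∪ {∞_I}` (`I ⊆ J` almost closed) and their
binary products are themselves `J`-convergence spaces. For a point `(u, v)` in the closure of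
`A` but not in `A`, either a slice of `A` through `(u, v)` accumulates at it, a one-dimensional
problem, or `u` and `v` are limits and `A` avoids the upper edges of a box below `(u, v)`. Then
a transfinite recursion indexed by the first factor picks points of `A` in shrinking boxes and
takes suprema at limit stages; the first stage where it leaves `A` is a limit `x₀`, and the
recursion below `x₀` is the required probe.

Given this, the classical argument for `k`-spaces applies. If `(q × id)⁻¹ W` is `J`-open and a
probe `f` into `Y × Z` ends at `(q x₀, z) ∈ W`, then for a tail `P` of its domain the set
`O = {x | ∀ p ∈ P, (x, (f p).2) ∈ (q × id)⁻¹ W}` contains `x₀` and is open in `X`: a probe of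
`X` ending in `O`, paired with `(f ·).2`, is a map out of a product of two probe domains, and
the tube lemma around `{∞} × P` shows that the probe enters `O`. As `O` is `q`-saturated,
`q '' O` is open in `Y`, so `f` enters `W` before `∞`.
-/

instance instOrderTopologyWithTop {α : Type*} [Preorder α] : OrderTopology (WithTop α) := ⟨rfl⟩

open Order Filter

section WellOrder

variable {α : Type*} [LinearOrder α] [WellFoundedLT α]

noncomputable def lub [OrderTop α] (s : Set α) : α :=
  wellFounded_lt.min (upperBounds s) ⟨⊤, fun _ _ => le_top⟩

theorem isLUB_lub [OrderTop α] (s : Set α) : IsLUB s (lub s) :=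
  ⟨wellFounded_lt.min_mem _ _, fun _ hb => not_lt.1 (wellFounded_lt.not_lt_min _ hb)⟩

theorem compactSpace_of_wellFoundedLT [OrderTop α] [TopologicalSpace α] [OrderTopology α] :
    CompactSpace α := by
  let := WellFoundedLT.toOrderBot α
  let := WellFoundedLT.conditionallyCompleteLinearOrderBot α
  exact ⟨isCompact_Icc.of_isClosed_subset isClosed_univ fun x _ => ⟨bot_le, le_top (a := x)⟩⟩

variable [TopologicalSpace α] [OrderTopology α]

theorem Ioc_mem_nhds_of_wellFoundedLT {a x : α} (h : a < x) : Ioc a x ∈ 𝓝 x :=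
  (isOpen_Ioi.inter (isLowerSet_Iic x).isOpen).mem_nhds ⟨h, le_rfl⟩

theorem exists_mem_Ioo_of_mem_closure {s : Set α} {x : α} (hx : x ∈ closure s) (hxs : x ∉ s)
    {b : α} (hb : b < x) : ∃ y ∈ s, y ∈ Ioo b x := by
  obtain ⟨y, hyI, hys⟩ := mem_closure_iff_nhds.1 hx _ (Ioc_mem_nhds_of_wellFoundedLT hb)
  exact ⟨y, hys, hyI.1, hyI.2.lt_of_ne fun h => hxs (h ▸ hys)⟩

theorem isSuccLimit_of_mem_closure {s : Set α} {x : α} (hx : x ∈ closure s) (hxs : x ∉ s) :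
    IsSuccLimit x := by
  refine ⟨fun hmin => ?_, fun b hb => ?_⟩
  · obtain ⟨y, hyx, hys⟩ :=
      mem_closure_iff_nhds.1 hx _ ((isLowerSet_Iic x).isOpen.mem_nhds le_rfl)
    exact hxs (le_antisymm hyx (hmin hyx) ▸ hys)
  · obtain ⟨y, -, hy⟩ := exists_mem_Ioo_of_mem_closure hx hxs hb.lt
    exact hb.2 hy.1 hy.2

end WellOrder

section NormalUpTo

variable {α β γ : Type*} [LinearOrder α] [LinearOrder β] [LinearOrder γ]

def IsNormalUpTo (f : α → β) (x₀ : α) : Prop :=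
  StrictMonoOn f (Iic x₀) ∧ ∀ x ≤ x₀, IsSuccLimit x → IsLUB (f '' Iio x) (f x)

theorem IsNormalUpTo.isNormal_comp {f : α → β} {x₀ : α} (hf : IsNormalUpTo f x₀) (e : γ ≤i α)
    (he : ∀ c, e c ≤ x₀) : IsNormal (f ∘ e) where
  strictMono _ _ h := hf.1 (he _) (he _) (e.strictMono h)
  mem_lowerBounds_upperBounds_of_isSuccLimit hc := by
    rw [image_comp, e.image_Iio]
    exact (hf.2 _ (he _) (e.map_isSuccLimit hc)).2

end NormalUpTo

section BoxPath

variable {α β : Type*} [LinearOrder α] [OrderTop α] [LinearOrder β] [OrderTop β]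
  (A : Set (α × β)) (u : α) (v : β) (a₁ : α) (b₁ : β)

-- The default `⊤` keeps `p ≤ boxStep A u v p` also when the box misses `A`.
open Classical in
noncomputable def boxStep (p : α × β) : α × β :=
  if h : (A ∩ Ioo p.1 u ×ˢ Ioo p.2 v).Nonempty then h.some else ⊤

theorem le_boxStep (p : α × β) : p ≤ boxStep A u v p := by
  unfold boxStep
  split_ifs with h
  · exact ⟨h.some_mem.2.1.1.le, h.some_mem.2.2.1.le⟩
  · exact le_top

variable {A u v} in
theorem boxStep_mem (hA : ∀ p ∈ Iio u ×ˢ Iio v, (A ∩ Ioo p.1 u ×ˢ Ioo p.2 v).Nonempty)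
    {p : α × β} (hp : p ∈ Iio u ×ˢ Iio v) : boxStep A u v p ∈ A ∩ Ioo p.1 u ×ˢ Ioo p.2 v := by
  rw [boxStep, dif_pos (hA p hp)]
  exact (hA p hp).some_mem

variable [WellFoundedLT α] [WellFoundedLT β]

noncomputable def prodLub (s : Set (α × β)) : α × β := (lub (Prod.fst '' s), lub (Prod.snd '' s))

theorem isLUB_prodLub (s : Set (α × β)) : IsLUB s (prodLub s) :=
  isLUB_prod.2 ⟨isLUB_lub _, isLUB_lub _⟩

-- Bounding the first coordinate below by the stage `x` makes the path leave the box by stage `u`.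
open Classical in
noncomputable def boxPath : α → α × β :=
  wellFounded_lt.fix fun x χ =>
    if IsSuccLimit x then prodLub (range fun y : Iio x => χ y y.2)
    else boxStep A u v (prodLub (range fun y : Iio x => χ y y.2) ⊔ (x ⊔ a₁, b₁))

open Classical in
theorem boxPath_eq (x : α) : boxPath A u v a₁ b₁ x =
    if IsSuccLimit x then prodLub (boxPath A u v a₁ b₁ '' Iio x)
    else boxStep A u v (prodLub (boxPath A u v a₁ b₁ '' Iio x) ⊔ (x ⊔ a₁, b₁)) := by
  rw [boxPath, wellFounded_lt.fix_eq, image_eq_range]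

theorem prodLub_image_Iio_le_boxPath (x : α) :
    prodLub (boxPath A u v a₁ b₁ '' Iio x) ≤ boxPath A u v a₁ b₁ x := by
  rw [boxPath_eq]
  split_ifs
  · exact le_rfl
  · exact le_sup_left.trans (le_boxStep A u v _)

theorem monotone_boxPath : Monotone (boxPath A u v a₁ b₁) := by
  intro y x hyx
  rcases hyx.lt_or_eq with hyx | rfl
  · exact ((isLUB_prodLub _).1 (mem_image_of_mem _ (mem_Iio.2 hyx))).trans
      (prodLub_image_Iio_le_boxPath A u v a₁ b₁ x)
  · exact le_rfl

variable {A u v a₁ b₁}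

theorem boxPath_mem_of_not_isSuccLimit
    (hA : ∀ p ∈ Iio u ×ˢ Iio v, (A ∩ Ioo p.1 u ×ˢ Ioo p.2 v).Nonempty) (ha₁ : a₁ < u)
    (hb₁ : b₁ < v) {x : α} (hx : ¬IsSuccLimit x) (hxu : x < u)
    (hbelow : ∀ y < x, boxPath A u v a₁ b₁ y ∈ Iio u ×ˢ Iio v) :
    boxPath A u v a₁ b₁ x ∈ A ∩ Ioo (x ⊔ a₁) u ×ˢ Ioo b₁ v ∧
      ∀ y < x, (boxPath A u v a₁ b₁ y).1 < (boxPath A u v a₁ b₁ x).1 ∧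
        (boxPath A u v a₁ b₁ y).2 < (boxPath A u v a₁ b₁ x).2 := by
  set χ := boxPath A u v a₁ b₁
  have hlub : prodLub (χ '' Iio x) ∈ Iio u ×ˢ Iio v := by
    rcases not_isSuccLimit_iff.1 hx with hmin | hpre
    · have : prodLub (χ '' Iio x) ≤ (a₁, b₁) :=
        (isLUB_prodLub _).2 (by simp [hmin.Iio_eq])
      exact ⟨this.1.trans_lt ha₁, this.2.trans_lt hb₁⟩
    · obtain ⟨m, hm⟩ := not_isSuccPrelimit_iff.1 hpre
      rw [hm.Iio_eq, (isLUB_prodLub _).unique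
        ((monotone_boxPath A u v a₁ b₁).map_isGreatest isGreatest_Iic).isLUB]
      exact hbelow m hm.lt
  set p := prodLub (χ '' Iio x) ⊔ (x ⊔ a₁, b₁)
  have hp : p ∈ Iio u ×ˢ Iio v := ⟨max_lt hlub.1 (max_lt hxu ha₁), max_lt hlub.2 hb₁⟩
  have hχ : χ x = boxStep A u v p := (boxPath_eq A u v a₁ b₁ x).trans (if_neg hx)
  obtain ⟨hxA, h₁, h₂⟩ := hχ ▸ boxStep_mem hA hp
  have hχp : ∀ y < x, χ y ≤ p := fun y hy =>
    ((isLUB_prodLub _).1 (mem_image_of_mem _ (mem_Iio.2 hy))).trans le_sup_left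
  refine ⟨⟨hxA, ⟨(le_sup_right : x ⊔ a₁ ≤ p.1).trans_lt h₁.1, h₁.2⟩,
    ⟨(le_sup_right : b₁ ≤ p.2).trans_lt h₂.1, h₂.2⟩⟩, fun y hy => ?_⟩
  exact ⟨(hχp y hy).1.trans_lt h₁.1, (hχp y hy).2.trans_lt h₂.1⟩

theorem boxPath_lt_of_lt (hA : ∀ p ∈ Iio u ×ˢ Iio v, (A ∩ Ioo p.1 u ×ˢ Ioo p.2 v).Nonempty)
    (ha₁ : a₁ < u) (hb₁ : b₁ < v) {x₀ : α} (hx₀ : IsSuccLimit x₀) (hx₀u : x₀ ≤ u)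
    (hbelow : ∀ y < x₀, boxPath A u v a₁ b₁ y ∈ Iio u ×ˢ Iio v) {z x : α} (hzx : z < x)
    (hx : x ≤ x₀) :
    (boxPath A u v a₁ b₁ z).1 < (boxPath A u v a₁ b₁ x).1 ∧
      (boxPath A u v a₁ b₁ z).2 < (boxPath A u v a₁ b₁ x).2 ∧
      a₁ < (boxPath A u v a₁ b₁ x).1 ∧ b₁ < (boxPath A u v a₁ b₁ x).2 := by
  -- a successor stage `w` with `z < w ≤ x`, at which the path strictly increases
  obtain ⟨w, hzw, hwx⟩ := exists_covBy_le_of_lt hzx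
  have hwlim : ¬IsSuccLimit w := fun h => h.isSuccPrelimit z hzw
  have hw : w < x₀ := (hwx.trans hx).lt_of_ne fun h => hwlim (h ▸ hx₀)
  obtain ⟨⟨-, h₁, h₂⟩, hlt⟩ := boxPath_mem_of_not_isSuccLimit hA ha₁ hb₁ hwlim
    (hw.trans_le hx₀u) fun y hy => hbelow y (hy.trans hw)
  have hwx' := monotone_boxPath A u v a₁ b₁ hwx
  exact ⟨(hlt z hzw.lt).1.trans_le hwx'.1, (hlt z hzw.lt).2.trans_le hwx'.2,
    ((le_sup_right : a₁ ≤ w ⊔ a₁).trans_lt h₁.1).trans_le hwx'.1, h₂.1.trans_le hwx'.2⟩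

theorem exists_isNormalUpTo_boxPath
    (hA : ∀ p ∈ Iio u ×ˢ Iio v, (A ∩ Ioo p.1 u ×ˢ Ioo p.2 v).Nonempty) (hu : IsSuccLimit u)
    (ha₁ : a₁ < u) (hb₁ : b₁ < v) (hAu : ∀ t ∈ Ioc b₁ v, (u, t) ∉ A)
    (hAv : ∀ s ∈ Ioc a₁ u, (s, v) ∉ A) :
    ∃ x₀, IsSuccLimit x₀ ∧ IsNormalUpTo (Prod.fst ∘ boxPath A u v a₁ b₁) x₀ ∧
      IsNormalUpTo (Prod.snd ∘ boxPath A u v a₁ b₁) x₀ ∧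
      (∀ y < x₀, boxPath A u v a₁ b₁ y ∈ A) ∧ boxPath A u v a₁ b₁ x₀ ∉ A := by
  set χ := boxPath A u v a₁ b₁
  let Good x := χ x ∈ A ∧ x ≤ (χ x).1 ∧ χ x ∈ Iio u ×ˢ Iio v
  have hu_bad : ¬Good u := fun h => (h.2.1.trans_lt h.2.2.1).false
  obtain ⟨x₀, hx₀, hmin⟩ := wellFounded_lt.has_min {x | ¬Good x} ⟨u, hu_bad⟩
  have hgood : ∀ y < x₀, Good y := fun y hy => not_not.1 fun h => hmin y h hy
  have hx₀u : x₀ ≤ u := not_lt.1 (hmin u hu_bad)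
  have hlim : IsSuccLimit x₀ := by
    by_contra hlim
    obtain ⟨⟨hA₀, h₁, h₂⟩, -⟩ := boxPath_mem_of_not_isSuccLimit hA ha₁ hb₁ hlim
      (hx₀u.lt_of_ne fun h => hlim (h ▸ hu)) fun z hz => (hgood z hz).2.2
    exact hx₀ ⟨hA₀, le_sup_left.trans h₁.1.le, h₁.2, h₂.2⟩
  have hinc : ∀ z x, z < x → x ≤ x₀ →
      (χ z).1 < (χ x).1 ∧ (χ z).2 < (χ x).2 ∧ a₁ < (χ x).1 ∧ b₁ < (χ x).2 :=
    fun _ _ hzx hx => boxPath_lt_of_lt hA ha₁ hb₁ hlim hx₀u (fun y hy => (hgood y hy).2.2) hzx hx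
  have hlub : ∀ x, IsSuccLimit x → IsLUB (χ '' Iio x) (χ x) := fun x hx => by
    rw [show χ x = _ from (boxPath_eq A u v a₁ b₁ x).trans (if_pos hx)]
    exact isLUB_prodLub _
  refine ⟨x₀, hlim, ⟨fun z _ x hx hzx => (hinc z x hzx hx).1, fun x _ hx => ?_⟩,
    ⟨fun z _ x hx hzx => (hinc z x hzx hx).2.1, fun x _ hx => ?_⟩, fun y hy => (hgood y hy).1, ?_⟩
  · rw [image_comp]
    exact (isLUB_prod.1 (hlub x hx)).1
  · rw [image_comp]
    exact (isLUB_prod.1 (hlub x hx)).2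
  -- `χ x₀` is the supremum of the earlier points: on the upper edges of the box `A` is absent,
  -- and in its interior `x₀` would be good
  intro hA₀
  obtain ⟨hle₁, hle₂⟩ : (χ x₀).1 ≤ u ∧ (χ x₀).2 ≤ v :=
    ((hlub x₀ hlim).2 fun _ ⟨y, hy, e⟩ => e ▸ ⟨(hgood y hy).2.2.1.le, (hgood y hy).2.2.2.le⟩ :
      χ x₀ ≤ (u, v))
  obtain ⟨z, hz⟩ := not_isMin_iff.1 hlim.not_isMin
  obtain ⟨-, -, ha, hb⟩ := hinc z x₀ hz le_rfl
  have hx₀le : x₀ ≤ (χ x₀).1 :=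
    hlim.isLUB_Iio.2 fun y hy => (hgood y hy).2.1.trans (hinc y x₀ hy le_rfl).1.le
  rcases hle₁.lt_or_eq with h₁ | h₁
  · rcases hle₂.lt_or_eq with h₂ | h₂
    · exact hx₀ ⟨hA₀, hx₀le, h₁, h₂⟩
    · exact hAv _ ⟨ha, hle₁⟩ (by rw [← h₂]; exact hA₀)
  · exact hAu _ ⟨hb, hle₂⟩ (by rw [← h₁]; exact hA₀)

end BoxPath

theorem AlmostClosedIn.exists_gt {S : Type*} [LinearOrder S] [TopologicalSpace S] [OrderTopology S]
    {s : Set S} (hs : AlmostClosedIn s) {x : S} (hx : x ∈ s) : ∃ y ∈ s, x < y := by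
  obtain ⟨ℓ, hℓ, hℓs⟩ := hs
  have hℓcl : ℓ ∈ closure s := (hℓ.symm.subset rfl).1
  obtain ⟨y, hxy, hys⟩ := mem_closure_iff.1 hℓcl _ isOpen_Ioi (hℓs.1 x hx)
  exact ⟨y, hys, hxy⟩

theorem AlmostClosedIn.nonempty {S : Type*} [LinearOrder S] [TopologicalSpace S] {s : Set S}
    (hs : AlmostClosedIn s) : s.Nonempty := by
  obtain ⟨ℓ, hℓ, -⟩ := hs
  exact closure_nonempty_iff.1 ⟨ℓ, (hℓ.symm.subset rfl).1⟩

theorem AlmostClosedIn.of_subset {S : Type*} [LinearOrder S] [WellFoundedLT S] [TopologicalSpace S]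
    [OrderTopology S] {s t : Set S} (hs : AlmostClosedIn s) (hts : t ⊆ s)
    (hlow : ∀ x ∈ s, ∀ y ∈ t, x < y → x ∈ t) (hne : t.Nonempty) (hmax : ∀ y ∈ t, ∃ z ∈ t, y < z) :
    AlmostClosedIn t := by
  obtain ⟨ℓ, hℓ, hℓs⟩ := hs
  obtain ⟨m, hm, hmin⟩ := wellFounded_lt.has_min {b | ∀ i ∈ t, i < b}
    ⟨ℓ, fun i hi => hℓs.1 i (hts hi)⟩
  have hmℓ : m ≤ ℓ := not_lt.1 (hmin ℓ fun i hi => hℓs.1 i (hts hi))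
  have hlub : IsLUB t m := by
    refine ⟨fun i hi => (hm i hi).le, fun b hb => not_lt.1 fun hbm => ?_⟩
    have hb' : ¬∀ i ∈ t, i < b := fun h => hmin b h hbm
    push Not at hb'
    obtain ⟨i, hi, hbi⟩ := hb'
    obtain ⟨z, hz, hiz⟩ := hmax i hi
    exact (hbi.trans_lt hiz).not_ge (hb hz)
  refine ⟨m, Subset.antisymm (fun z ⟨hzcl, hzt⟩ => ?_)
    (singleton_subset_iff.2 ⟨hlub.mem_closure hne, fun h => (hm m h).false⟩),
    hm, fun b hb => not_lt.1 (hmin b hb)⟩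
  have hzm : z ≤ m := closure_minimal (fun i hi => (hm i hi).le) isClosed_Iic hzcl
  refine hzm.antisymm (not_lt.1 fun hzm' => ?_)
  have hzs : z ∈ s := by
    by_contra hzs
    have : z = ℓ := hℓ.subset ⟨closure_mono hts hzcl, hzs⟩
    exact (hzm'.trans_le hmℓ).ne this
  obtain ⟨y, hy, hzy, -⟩ := hlub.exists_between hzm'
  exact hzt (hlow z hzs y hy hzy)

section Probes

variable {J : Type*} [LinearOrder J]

theorem AlmostClosed.isSuccLimit_top {K : Set J} (hK : AlmostClosed K) :
    IsSuccLimit (⊤ : WithTop K) := by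
  obtain ⟨_, ⟨j, hj, rfl⟩⟩ := AlmostClosedIn.nonempty hK
  have : Nonempty K := ⟨⟨j, hj⟩⟩
  have : NoMaxOrder K := ⟨fun k => by
    obtain ⟨_, ⟨i, hi, rfl⟩, hki⟩ := AlmostClosedIn.exists_gt hK ⟨k.1, k.2, rfl⟩
    exact ⟨⟨i, hi⟩, show k.1 < i from WithTop.coe_lt_coe.1 hki⟩⟩
  exact WithTop.isSuccLimit_top

theorem AlmostClosed.exists_coe_mem_of_mem_nhds {K : Set J} (hK : AlmostClosed K)
    {N : Set (WithTop K)} (hN : N ∈ 𝓝 ⊤) : ∃ i : K, (i : WithTop K) ∈ N := by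
  obtain ⟨l, hl, hsub⟩ := exists_Ioc_subset_of_mem_nhds hN
    (not_isMin_iff.1 hK.isSuccLimit_top.not_isMin)
  obtain ⟨c, hc, hlc⟩ := hK.isSuccLimit_top.lt_iff_exists_lt.1 hl
  obtain ⟨i, rfl⟩ := WithTop.ne_top_iff_exists.1 hc.ne
  exact ⟨i, hsub ⟨hlc, le_top⟩⟩

def indexBelow (K : Set J) (w : WithTop K) : Set J :=
  {j | ∃ h : j ∈ K, ((⟨j, h⟩ : K) : WithTop K) < w}

noncomputable def embedBelowFun (K : Set J) (w : WithTop K) :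
    WithTop (indexBelow K w) → WithTop K :=
  WithTop.recTopCoe w fun i => ((⟨i.1, i.2.1⟩ : K) : WithTop K)

theorem embedBelowFun_coe_lt (K : Set J) (w : WithTop K) (i : indexBelow K w) :
    embedBelowFun K w i < w :=
  i.2.2

theorem strictMono_embedBelowFun (K : Set J) (w : WithTop K) :
    StrictMono (embedBelowFun K w) := by
  intro a b hab
  induction b using WithTop.recTopCoe with
  | top =>
    obtain ⟨i, rfl⟩ := WithTop.ne_top_iff_exists.1 hab.ne
    exact embedBelowFun_coe_lt K w i
  | coe j =>
    obtain ⟨i, rfl⟩ := WithTop.ne_top_iff_exists.1 (hab.trans (WithTop.coe_lt_top j)).ne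
    exact WithTop.coe_lt_coe.2 (WithTop.coe_lt_coe.1 hab : i < j)

noncomputable def embedBelow (K : Set J) (w : WithTop K) :
    WithTop (indexBelow K w) ≤i WithTop K where
  toRelEmbedding := (OrderEmbedding.ofStrictMono _ (strictMono_embedBelowFun K w)).ltEmbedding
  mem_range_of_rel' a b hb := by
    have hbw : b < w := hb.trans_le <| by
      induction a using WithTop.recTopCoe with
      | top => exact le_rfl
      | coe i => exact (embedBelowFun_coe_lt K w i).le
    obtain ⟨k, rfl⟩ := WithTop.ne_top_iff_exists.1 (hbw.trans_le le_top).ne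
    exact ⟨((⟨k.1, k.2, hbw⟩ : indexBelow K w) : WithTop _), rfl⟩

theorem embedBelow_le (K : Set J) (w : WithTop K) (z : WithTop (indexBelow K w)) :
    embedBelow K w z ≤ w :=
  (embedBelow K w).monotone (le_top : z ≤ ⊤)

theorem embedBelow_coe_lt (K : Set J) (w : WithTop K) (i : indexBelow K w) :
    embedBelow K w i < w :=
  embedBelowFun_coe_lt K w i

theorem almostClosed_indexBelow [WellFoundedLT J] {K : Set J} (hK : AlmostClosed K) {w : WithTop K}
    (hw : IsSuccLimit w) : AlmostClosed (indexBelow K w) := by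
  refine AlmostClosedIn.of_subset hK (image_mono fun j hj => hj.1) ?_ ?_ ?_
  · rintro _ ⟨j, hj, rfl⟩ _ ⟨i, ⟨hi, hiw⟩, rfl⟩ hji
    exact ⟨j, ⟨hj, lt_trans (WithTop.coe_lt_coe.2 (Subtype.mk_lt_mk.2
      (WithTop.coe_lt_coe.1 hji))) hiw⟩, rfl⟩
  · obtain ⟨z, hz⟩ := not_isMin_iff.1 hw.not_isMin
    obtain ⟨k, rfl⟩ := WithTop.ne_top_iff_exists.1 (hz.trans_le le_top).ne
    exact ⟨k.1, ⟨k.1, ⟨k.2, hz⟩, rfl⟩⟩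
  · rintro _ ⟨i, ⟨hi, hiw⟩, rfl⟩
    obtain ⟨c, hcw, hic⟩ := hw.lt_iff_exists_lt.1 hiw
    obtain ⟨k, rfl⟩ := WithTop.ne_top_iff_exists.1 (hcw.trans_le le_top).ne
    exact ⟨k.1, ⟨k.1, ⟨k.2, hcw⟩, rfl⟩,
      WithTop.coe_lt_coe.2 (WithTop.coe_lt_coe.1 hic : (⟨i, hi⟩ : K) < k)⟩

end Probes

def HasJEscape (J : Type v) [LinearOrder J] {T : Type u} [TopologicalSpace T] (A : Set T) : Prop :=
  ∃ I : Set J, AlmostClosed I ∧ ∃ f : WithTop I → T, Continuous f ∧ (∀ i : I, f i ∈ A) ∧ f ⊤ ∉ A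

section Escape

variable {J : Type v} [LinearOrder J] [WellFoundedLT J]

theorem hasJEscape_of_isNormalUpTo {K : Set J} (hK : AlmostClosed K) {x₀ : WithTop K}
    (hx₀ : IsSuccLimit x₀) {β γ : Type u} [LinearOrder β] [WellFoundedLT β] [TopologicalSpace β]
    [OrderTopology β] [LinearOrder γ] [WellFoundedLT γ] [TopologicalSpace γ] [OrderTopology γ]
    {χ : WithTop K → β × γ} (h₁ : IsNormalUpTo (Prod.fst ∘ χ) x₀)
    (h₂ : IsNormalUpTo (Prod.snd ∘ χ) x₀) {A : Set (β × γ)} (hA : ∀ y < x₀, χ y ∈ A)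
    (hx₀A : χ x₀ ∉ A) : HasJEscape J A := by
  refine ⟨indexBelow K x₀, almostClosed_indexBelow hK hx₀, χ ∘ embedBelow K x₀, ?_,
    fun i => hA _ (embedBelow_coe_lt K x₀ i), hx₀A⟩
  exact (h₁.isNormal_comp _ (embedBelow_le K x₀)).continuous.prodMk
    (h₂.isNormal_comp _ (embedBelow_le K x₀)).continuous

theorem hasJEscape_of_box {K₁ K₂ : Set J} (hK₁ : AlmostClosed K₁)
    {A : Set (WithTop K₁ × WithTop K₂)} {u a₁ : WithTop K₁} {v b₁ : WithTop K₂}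
    (hA : ∀ p ∈ Iio u ×ˢ Iio v, (A ∩ Ioo p.1 u ×ˢ Ioo p.2 v).Nonempty) (hu : IsSuccLimit u)
    (ha₁ : a₁ < u) (hb₁ : b₁ < v) (hAu : ∀ t ∈ Ioc b₁ v, (u, t) ∉ A)
    (hAv : ∀ s ∈ Ioc a₁ u, (s, v) ∉ A) : HasJEscape J A := by
  obtain ⟨x₀, hx₀, h₁, h₂, hin, hout⟩ := exists_isNormalUpTo_boxPath hA hu ha₁ hb₁ hAu hAv
  exact hasJEscape_of_isNormalUpTo hK₁ hx₀ h₁ h₂ hin hout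

theorem isJConvergence_withTop {K : Set J} (hK : AlmostClosed K) :
    IsJConvergence J (WithTop K) := by
  intro B hB
  obtain ⟨p, hp, hpB⟩ := not_subset.1 (mt closure_subset_iff_isClosed.1 hB)
  have hlim := isSuccLimit_of_mem_closure hp hpB
  obtain ⟨a, ha⟩ := not_isMin_iff.1 hlim.not_isMin
  -- run the two-dimensional construction along the diagonal of `B ×ˢ B`
  have hBB : HasJEscape J (B ×ˢ B) := by
    refine hasJEscape_of_box hK (fun q hq => ?_) hlim ha ha (fun _ _ h => hpB h.1)
      (fun _ _ h => hpB h.2)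
    obtain ⟨x, hxB, hx⟩ := exists_mem_Ioo_of_mem_closure hp hpB hq.1
    obtain ⟨y, hyB, hy⟩ := exists_mem_Ioo_of_mem_closure hp hpB hq.2
    exact ⟨(x, y), ⟨hxB, hyB⟩, hx, hy⟩
  obtain ⟨I, hI, χ, hχ, hin, hout⟩ := hBB
  by_cases h : (χ ⊤).1 ∈ B
  · exact ⟨I, hI, Prod.snd ∘ χ, continuous_snd.comp hχ, fun i => (hin i).2, fun h' => hout ⟨h, h'⟩⟩
  · exact ⟨I, hI, Prod.fst ∘ χ, continuous_fst.comp hχ, fun i => (hin i).1, h⟩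

theorem hasJEscape_of_notMem_closure_slices {K₁ K₂ : Set J} (hK₁ : AlmostClosed K₁)
    {A : Set (WithTop K₁ × WithTop K₂)} {u : WithTop K₁} {v : WithTop K₂} (huv : (u, v) ∈ closure A)
    (hu : u ∉ closure {s | (s, v) ∈ A}) (hv : v ∉ closure {t | (u, t) ∈ A}) : HasJEscape J A := by
  have hN₁ := isClosed_closure.isOpen_compl.mem_nhds hu
  have hN₂ := isClosed_closure.isOpen_compl.mem_nhds hv
  have hN₁A : ∀ s ∈ (closure {s | (s, v) ∈ A})ᶜ, (s, v) ∉ A := fun s hs h => hs (subset_closure h)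
  have hN₂A : ∀ t ∈ (closure {t | (u, t) ∈ A})ᶜ, (u, t) ∉ A := fun t ht h => ht (subset_closure h)
  have hulim : IsSuccLimit u := by
    refine isSuccLimit_of_mem_closure (s := Prod.fst '' (A ∩ univ ×ˢ (closure {t | (u, t) ∈ A})ᶜ))
      (mem_closure_iff_nhds.2 fun U hU => ?_) ?_
    · obtain ⟨q, hq, hqA⟩ := mem_closure_iff_nhds.1 huv _ (prod_mem_nhds hU hN₂)
      exact ⟨q.1, hq.1, q, ⟨hqA, trivial, hq.2⟩, rfl⟩
    · rintro ⟨q, ⟨hqA, -, hq⟩, rfl⟩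
      exact hN₂A q.2 hq hqA
  have hvlim : IsSuccLimit v := by
    refine isSuccLimit_of_mem_closure (s := Prod.snd '' (A ∩ (closure {s | (s, v) ∈ A})ᶜ ×ˢ univ))
      (mem_closure_iff_nhds.2 fun V hV => ?_) ?_
    · obtain ⟨q, hq, hqA⟩ := mem_closure_iff_nhds.1 huv _ (prod_mem_nhds hN₁ hV)
      exact ⟨q.2, hq.2, q, ⟨hqA, hq.1, trivial⟩, rfl⟩
    · rintro ⟨q, ⟨hqA, hq, -⟩, rfl⟩
      exact hN₁A q.1 hq hqA
  obtain ⟨a₁, ha₁, hsub₁⟩ := exists_Ioc_subset_of_mem_nhds hN₁ (not_isMin_iff.1 hulim.not_isMin)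
  obtain ⟨b₁, hb₁, hsub₂⟩ := exists_Ioc_subset_of_mem_nhds hN₂ (not_isMin_iff.1 hvlim.not_isMin)
  refine hasJEscape_of_box hK₁ (fun q hq => ?_) hulim ha₁ hb₁ (fun t ht => hN₂A t (hsub₂ ht))
    (fun s hs => hN₁A s (hsub₁ hs))
  obtain ⟨r, ⟨hr₁, hr₂⟩, hrA⟩ := mem_closure_iff_nhds.1 huv _ (prod_mem_nhds
    (Ioc_mem_nhds_of_wellFoundedLT (max_lt hq.1 ha₁))
    (Ioc_mem_nhds_of_wellFoundedLT (max_lt hq.2 hb₁)))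
  have hr₁u : r.1 < u := hr₁.2.lt_of_ne fun h =>
    hN₂A r.2 (hsub₂ ⟨le_sup_right.trans_lt hr₂.1, hr₂.2⟩) (by rw [← h]; exact hrA)
  have hr₂v : r.2 < v := hr₂.2.lt_of_ne fun h =>
    hN₁A r.1 (hsub₁ ⟨le_sup_right.trans_lt hr₁.1, hr₁.2⟩) (by rw [← h]; exact hrA)
  exact ⟨r, hrA, ⟨le_sup_left.trans_lt hr₁.1, hr₁u⟩, ⟨le_sup_left.trans_lt hr₂.1, hr₂v⟩⟩

theorem isJConvergence_withTop_prod {K₁ K₂ : Set J} (hK₁ : AlmostClosed K₁)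
    (hK₂ : AlmostClosed K₂) :
    IsJConvergence J (WithTop K₁ × WithTop K₂) := by
  intro A hA
  obtain ⟨⟨u, v⟩, huv, huvA⟩ := not_subset.1 (mt closure_subset_iff_isClosed.1 hA)
  by_cases hv : v ∈ closure {t | (u, t) ∈ A}
  · obtain ⟨I, hI, f, hf, hin, hout⟩ :=
      isJConvergence_withTop hK₂ _ fun h => huvA (h.closure_subset hv)
    exact ⟨I, hI, fun z => (u, f z), continuous_const.prodMk hf, hin, hout⟩
  by_cases hu : u ∈ closure {s | (s, v) ∈ A}
  · obtain ⟨I, hI, f, hf, hin, hout⟩ :=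
      isJConvergence_withTop hK₁ _ fun h => huvA (h.closure_subset hu)
    exact ⟨I, hI, fun z => (f z, v), hf.prodMk continuous_const, hin, hout⟩
  exact hasJEscape_of_notMem_closure_slices hK₁ huv hu hv

end Escape

section JTopology

variable {J : Type v} [LinearOrder J]

theorem JClosedSet.preimage {X : Type u} {Y : Type w} [TopologicalSpace X] [TopologicalSpace Y]
    {f : X → Y} (hf : Continuous f) {C : Set Y} (hC : JClosedSet J Y C) :
    JClosedSet J X (f ⁻¹' C) :=
  fun I hI g hg hin => hC I hI (f ∘ g) (hf.comp hg) hin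

theorem IsJConvergence.isClosed_of_jClosedSet {X : Type u} [TopologicalSpace X]
    (hX : IsJConvergence J X) {C : Set X} (hC : JClosedSet J X C) : IsClosed C := by
  by_contra h
  obtain ⟨I, hI, f, hf, hin, hout⟩ := hX C h
  exact hout (hC I hI f hf hin)

theorem IsJConvergence.continuous_jTop {S : Type u} {T : Type w} [TopologicalSpace S]
    [TopologicalSpace T] (hS : IsJConvergence J S) {f : S → T} (hf : Continuous f) :
    Continuous[_, jTop J T] f :=
  continuous_generateFrom_iff.2 fun _ hU =>
    isClosed_compl_iff.1 (hS.isClosed_of_jClosedSet (hU.preimage hf))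

theorem IsJConvergence.isOpen_preimage {S : Type u} {T : Type w} [TopologicalSpace S]
    [TopologicalSpace T] (hS : IsJConvergence J S) {f : S → T} (hf : Continuous f) {U : Set T}
    (hU : IsOpen[jTop J T] U) : IsOpen (f ⁻¹' U) :=
  @Continuous.isOpen_preimage _ _ _ (jTop J T) f (hS.continuous_jTop hf) U hU

theorem continuous_jTop_jTop {S : Type u} {T : Type w} [TopologicalSpace S] [TopologicalSpace T]
    {f : S → T} (hf : Continuous f) : Continuous[jTop J S, jTop J T] f :=
  continuous_generateFrom_iff.2 fun _ hU => isOpen_generateFrom_of_mem (hU.preimage hf)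

variable [WellFoundedLT J]

theorem IsJConvergence.isOpen_setOf_forall_mem {X Z : Type u} [TopologicalSpace X]
    [TopologicalSpace Z] (hX : IsJConvergence J X) {K : Set J} (hK : AlmostClosed K)
    {k : WithTop K → Z} (hk : Continuous k) {V : Set (X × Z)} (hV : IsOpen[jTop J (X × Z)] V)
    {s : Set (WithTop K)} (hs : IsClosed s) : IsOpen {x | ∀ p ∈ s, (x, k p) ∈ V} := by
  rw [← isClosed_compl_iff]
  by_contra h
  obtain ⟨I, hI, φ, hφ, hin, hout⟩ := hX _ h
  have hψ : IsOpen (Prod.map φ k ⁻¹' V) :=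
    (isJConvergence_withTop_prod hI hK).isOpen_preimage (hφ.prodMap hk) hV
  have : CompactSpace (WithTop K) := compactSpace_of_wellFoundedLT
  obtain ⟨N, M, hN, -, hNtop, hsM, hNM⟩ :=
    generalized_tube_lemma isCompact_singleton hs.isCompact hψ
      (by rintro ⟨_, p⟩ ⟨rfl, hp⟩; exact not_not.1 hout p hp)
  obtain ⟨i, hi⟩ := hI.exists_coe_mem_of_mem_nhds (hN.mem_nhds (hNtop rfl))
  exact hin i fun p hp => hNM (mk_mem_prod hi (hsM hp))

theorem jOpenSet_of_isOpen_preimage_prodMap {X Y Z : Type u} [TopologicalSpace X]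
    [TopologicalSpace Y] [TopologicalSpace Z] (hX : IsJConvergence J X) {q : X → Y}
    (hq : IsQuotientMap q) {W : Set (Y × Z)} (hW : IsOpen[jTop J (X × Z)] (Prod.map q id ⁻¹' W)) :
    JOpenSet J (Y × Z) W := by
  intro I hI f hf hin
  by_contra htop
  rw [mem_compl_iff, not_not] at htop
  obtain ⟨x₀, hx₀⟩ := hq.surjective (f ⊤).1
  have hk : Continuous (Prod.snd ∘ f) := continuous_snd.comp hf
  have hP : IsOpen {p | (x₀, (f p).2) ∈ Prod.map q id ⁻¹' W} :=
    (isJConvergence_withTop hI).isOpen_preimage (continuous_const.prodMk hk) hW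
  have hPtop : ⊤ ∈ {p | (x₀, (f p).2) ∈ Prod.map q id ⁻¹' W} := by
    show (q x₀, (f ⊤).2) ∈ W
    rwa [hx₀]
  obtain ⟨a, ha, hsub⟩ := exists_Ioc_subset_of_mem_nhds (hP.mem_nhds hPtop)
    (not_isMin_iff.1 hI.isSuccLimit_top.not_isMin)
  have hO : IsOpen {y | ∀ p ∈ Ioi a, (y, (f p).2) ∈ W} :=
    hq.isOpen_preimage.1 (hX.isOpen_setOf_forall_mem hI hk hW (isUpperSet_Ioi a).isClosed)
  have hftop : (f ⊤).1 ∈ {y | ∀ p ∈ Ioi a, (y, (f p).2) ∈ W} := fun p hp => by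
    rw [← hx₀]
    exact hsub ⟨hp, le_top⟩
  obtain ⟨i, hi, hai⟩ := hI.exists_coe_mem_of_mem_nhds
    (inter_mem ((hO.preimage (continuous_fst.comp hf)).mem_nhds hftop) (isOpen_Ioi.mem_nhds ha))
  exact hin i (hi i hai)

end JTopology

theorem stmt9_general {J : Type v} [LinearOrder J] [WellFoundedLT J] {X Y Z : Type u}
    [TopologicalSpace X] [TopologicalSpace Y] [TopologicalSpace Z]
    (hX : IsJConvergence J X) (q : X → Y) (hq : IsQuotientMap q) :
    @IsQuotientMap (X × Z) (Y × Z) (jTop J (X × Z)) (jTop J (Y × Z)) (Prod.map q id) := by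
  refine @IsQuotientMap.mk _ _ (jTop J (X × Z)) (jTop J (Y × Z)) _
    ((@isCoinducing_iff _ _ _ (jTop J (X × Z)) (jTop J (Y × Z))).2 fun W =>
      ⟨fun hW => ?_, fun hW => ?_⟩)
    (hq.surjective.prodMap Function.surjective_id)
  · exact isOpen_generateFrom_of_mem (jOpenSet_of_isOpen_preimage_prodMap hX hq hW)
  · exact @Continuous.isOpen_preimage _ _ (jTop J (X × Z)) (jTop J (Y × Z)) _
      (continuous_jTop_jTop (hq.continuous.prodMap continuous_id)) W hW

theorem stmt9 {J : Type v} [LinearOrder J] [WellFoundedLT J] [TopologicalSpace J]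
    [OrderTopology J] [NoncompactSpace J] {X Y Z : Type u}
    [TopologicalSpace X] [TopologicalSpace Y] [TopologicalSpace Z]
    (hX : IsJConvergence J X) (q : X → Y) (hq : IsQuotientMap q) :
    @IsQuotientMap (X × Z) (Y × Z) (jTop J (X × Z)) (jTop J (Y × Z)) (Prod.map q id) :=
  stmt9_general hX q hq
end

section
/- Fix a non-compact well-ordered space J. Suppose X and X′ are J-convergence spaces such that X × X′ (with the product topology) is a J-convergence space, and q : X → Y and q′ : X′ → Y′ are quotient maps. Then the direct product q × q′ : X × X′ → Y × Y′ (both with the product topology) is a quotient map if and only if Y × Y′ is a J-convergence space. -/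
open Set Topology TopologicalSpace

universe u v w

/-!
A quotient of a `J`-convergence space is again one, which gives `Y × Y'` from `X × X'`.
Conversely, openness of `U ⊆ Y × Y'` can be tested along probes `f = (g, g') : K → Y × Y'`,
`K = I ∪ {∞_I}` compact Hausdorff. The set `{(k, y') | (g k, y') ∈ U}` is open in `K × Y'`:
as `K` is locally compact, `id × q'` is a quotient map (Whitehead), and since `X'` is a
`J`-convergence space, continuity on `K × X'` is tested on the products `K × K'` with probes
`K'` of `X'`, where `q × id` is a quotient map for the same reason. Restricting to the graph of
`g'` shows that `f ⁻¹' U` is open.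
-/

instance WithTop.orderTopology_of_preorder {α : Type*} [Preorder α] :
    OrderTopology (WithTop α) := ⟨rfl⟩

instance WithTop.compactSpace_of_wellFoundedLT {α : Type*} [LinearOrder α] [WellFoundedLT α] :
    CompactSpace (WithTop α) := by
  let := WellFoundedLT.toOrderBot (WithTop α)
  let := WellFoundedLT.conditionallyCompleteLinearOrderBot (WithTop α)
  exact ⟨by simpa using isCompact_Icc (a := (⊥ : WithTop α)) (b := ⊤)⟩

lemma WithTop.top_mem_closure_range_coe {α : Type*} [LinearOrder α] [Nonempty α]
    [NoMaxOrder α] : (⊤ : WithTop α) ∈ closure (range ((↑) : α → WithTop α)) := by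
  refine IsLUB.mem_closure ⟨fun _ _ => le_top, fun b hb => ?_⟩ (range_nonempty _)
  induction b with
  | top => exact le_rfl
  | coe a =>
    obtain ⟨a', ha'⟩ := exists_gt a
    exact absurd (hb ⟨a', rfl⟩) (by simpa using ha')

lemma nonempty_of_noncompactSpace (J : Type*) [TopologicalSpace J] [NoncompactSpace J] :
    Nonempty J := by
  by_contra h
  exact noncompact_univ J (by simp [univ_eq_empty_iff.mpr (not_nonempty_iff.mp h)])

lemma noMaxOrder_of_noncompactSpace (J : Type*) [LinearOrder J] [WellFoundedLT J]
    [TopologicalSpace J] [OrderTopology J] [NoncompactSpace J] : NoMaxOrder J := by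
  refine ⟨fun a => ?_⟩
  by_contra! h
  have := nonempty_of_noncompactSpace J
  let := WellFoundedLT.toOrderBot J
  let := WellFoundedLT.conditionallyCompleteLinearOrderBot J
  have hIcc : Icc ⊥ a = univ := eq_univ_of_forall fun b => ⟨bot_le, h b⟩
  exact noncompact_univ J (hIcc ▸ isCompact_Icc)

section AlmostClosed

variable {J : Type*} [LinearOrder J]

lemma almostClosed_univ [Nonempty J] [NoMaxOrder J] : AlmostClosed (univ : Set J) := by
  refine ⟨⊤, ?_, fun _ ⟨a, _, ha⟩ => ha ▸ WithTop.coe_lt_top a, fun s hs => ?_⟩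
  · rw [image_univ]
    refine eq_singleton_iff_unique_mem.mpr ⟨⟨WithTop.top_mem_closure_range_coe, ?_⟩, ?_⟩
    · rintro ⟨a, ha⟩
      exact WithTop.coe_ne_top ha
    · rintro (_ | a) ⟨-, hx⟩
      · rfl
      · exact absurd ⟨a, rfl⟩ hx
  · induction s with
    | top => exact le_rfl
    | coe a => exact absurd (hs _ ⟨a, trivial, rfl⟩) (lt_irrefl _)

variable {I : Set J}

lemma AlmostClosed.nonempty (hI : AlmostClosed I) : I.Nonempty := by
  obtain ⟨ℓ, hℓ, -⟩ := hI
  by_contra h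
  simp [not_nonempty_iff_eq_empty.mp h] at hℓ

lemma AlmostClosed.noMaxOrder (hI : AlmostClosed I) : NoMaxOrder I := by
  obtain ⟨ℓ, hℓ, hℓ_least⟩ := hI
  refine ⟨fun m => ?_⟩
  have hℓ_mem : ℓ ∈ closure (((↑) : J → WithTop J) '' I) := (hℓ.symm.subset rfl).1
  obtain ⟨_, hmi, i, hi, rfl⟩ :=
    mem_closure_iff.mp hℓ_mem _ isOpen_Ioi (hℓ_least.1 _ ⟨m, m.2, rfl⟩)
  exact ⟨⟨i, hi⟩, Subtype.mk_lt_mk.mpr (WithTop.coe_lt_coe.mp hmi)⟩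

end AlmostClosed

namespace IsJConvergence

variable {J : Type*} [LinearOrder J] {X Y Z : Type*} [TopologicalSpace X] [TopologicalSpace Y]
  [TopologicalSpace Z]

lemma of_isQuotientMap (hX : IsJConvergence J X) {p : X → Y} (hp : IsQuotientMap p) :
    IsJConvergence J Y := by
  intro A hA
  obtain ⟨I, hI, w, hw, hwA, hw_top⟩ := hX (p ⁻¹' A) (mt hp.isClosed_preimage.mp hA)
  exact ⟨I, hI, p ∘ w, hp.continuous.comp hw, hwA, hw_top⟩

lemma continuous_of_forall_probe (hX : IsJConvergence J X) {g : X → Z}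
    (hg : ∀ I : Set J, AlmostClosed I → ∀ t : WithTop I → X, Continuous t → Continuous (g ∘ t)) :
    Continuous g := by
  refine continuous_iff_isClosed.mpr fun C hC => ?_
  by_contra hgC
  obtain ⟨I, hI, t, ht, htC, ht_top⟩ := hX _ hgC
  have := hI.nonempty.to_subtype
  have := hI.noMaxOrder
  refine ht_top ((hC.preimage (hg I hI t ht)).closure_subset_iff.mpr ?_
    WithTop.top_mem_closure_range_coe)
  rintro _ ⟨i, rfl⟩
  exact htC i

/-- By the exponential law for the locally compact `K`, it suffices that `x ↦ g (·, x)` is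
continuous into `C(K, Z)`, which is tested on probes. -/
lemma continuous_prod_of_forall_probe {K : Type*} [TopologicalSpace K] [LocallyCompactSpace K]
    (hX : IsJConvergence J X) {I₀ : Set J} (hI₀ : AlmostClosed I₀) {g : K × X → Z}
    (hg : ∀ I : Set J, AlmostClosed I → ∀ t : WithTop I → X, Continuous t →
      Continuous fun p : K × WithTop I => g (p.1, t p.2)) :
    Continuous g := by
  have hslice (x : X) : Continuous fun k => g (k, x) :=
    (hg I₀ hI₀ (fun _ => x) continuous_const).comp
      (continuous_id.prodMk (continuous_const (y := (⊤ : WithTop I₀))))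
  let G : X → C(K, Z) := fun x => ⟨fun k => g (k, x), hslice x⟩
  have hG : Continuous G := hX.continuous_of_forall_probe fun I hI t ht =>
    (ContinuousMap.curry ⟨_, (hg I hI t ht).comp continuous_swap⟩).continuous
  exact (ContinuousMap.continuous_uncurry_of_continuous ⟨G, hG⟩).comp continuous_swap

end IsJConvergence

theorem isQuotientMap_prodMap_of_isJConvergence {J : Type*} [LinearOrder J] [WellFoundedLT J]
    {X X' Y Y' : Type*} [TopologicalSpace X] [TopologicalSpace X'] [TopologicalSpace Y]
    [TopologicalSpace Y'] (hX' : IsJConvergence J X') {I₀ : Set J} (hI₀ : AlmostClosed I₀)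
    {q : X → Y} {q' : X' → Y'} (hq : IsQuotientMap q) (hq' : IsQuotientMap q')
    (hYY' : IsJConvergence J (Y × Y')) : IsQuotientMap (Prod.map q q') := by
  refine ⟨isCoinducing_iff.mpr fun U => ⟨fun hU => ?_,
    fun hU => hU.preimage (hq.continuous.prodMap hq'.continuous)⟩,
    hq.surjective.prodMap hq'.surjective⟩
  -- Open sets are continuous maps to `Prop`, so the lifting lemmas for quotients apply.
  rw [isOpen_iff_continuous_mem] at hU ⊢
  refine hYY'.continuous_of_forall_probe fun I _ f hf => ?_
  have hKX' : Continuous fun p : WithTop I × X' => ((f p.1).1, q' p.2) ∈ U :=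
    hX'.continuous_prod_of_forall_probe hI₀ fun I' _ t ht =>
      have hYK' : Continuous fun p : Y × WithTop I' => (p.1, q' (t p.2)) ∈ U :=
        hq.continuous_lift_prod_left (hU.comp (continuous_fst.prodMk (ht.comp continuous_snd)))
      hYK'.comp ((continuous_fst.comp (hf.comp continuous_fst)).prodMk continuous_snd)
  have hKY' : Continuous fun p : WithTop I × Y' => ((f p.1).1, p.2) ∈ U :=
    hq'.continuous_lift_prod_right hKX'
  exact hKY'.comp (continuous_id.prodMk (continuous_snd.comp hf))

theorem stmt10_general {J : Type v} [LinearOrder J] [WellFoundedLT J] [TopologicalSpace J]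
    [OrderTopology J] [NoncompactSpace J] {X X' Y Y' : Type u}
    [TopologicalSpace X] [TopologicalSpace X'] [TopologicalSpace Y] [TopologicalSpace Y']
    (hX' : IsJConvergence J X')
    (hXX' : IsJConvergence J (X × X'))
    (q : X → Y) (q' : X' → Y') (hq : IsQuotientMap q) (hq' : IsQuotientMap q') :
    IsQuotientMap (Prod.map q q') ↔ IsJConvergence J (Y × Y') := by
  have := nonempty_of_noncompactSpace J
  have := noMaxOrder_of_noncompactSpace J
  exact ⟨hXX'.of_isQuotientMap, isQuotientMap_prodMap_of_isJConvergence hX' almostClosed_univ hq hq'⟩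

theorem stmt10 {J : Type v} [LinearOrder J] [WellFoundedLT J] [TopologicalSpace J]
    [OrderTopology J] [NoncompactSpace J] {X X' Y Y' : Type u}
    [TopologicalSpace X] [TopologicalSpace X'] [TopologicalSpace Y] [TopologicalSpace Y']
    (hX : IsJConvergence J X) (hX' : IsJConvergence J X')
    (hXX' : IsJConvergence J (X × X'))
    (q : X → Y) (q' : X' → Y') (hq : IsQuotientMap q) (hq' : IsQuotientMap q') :
    IsQuotientMap (Prod.map q q') ↔ IsJConvergence J (Y × Y') :=
  stmt10_general hX' hXX' q q' hq hq'
end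

section
/- Fix a non-compact well-ordered space J. Every J-convergence space is a transfinite sequential space. -/
open Set Topology TopologicalSpace

universe u v w

theorem directedTopology_le_withTopOrderTopology (J' : Type*) [Preorder J'] :
    directedTopology J' ≤ withTopOrderTopology := by
  let _ := directedTopology J'
  refine le_generateFrom ?_
  rintro s ⟨a, rfl | rfl⟩
  · induction a with
    | top => simp [Ioi]
    | coe j => exact isOpen_generateFrom_of_mem (Or.inr ⟨j, rfl⟩)
  · rw [← biUnion_of_singleton (Iio a)]
    refine isOpen_biUnion fun b hb => ?_
    lift b to J' using (hb.trans_le le_top).ne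
    exact isOpen_generateFrom_of_mem (Or.inl ⟨b, rfl⟩)

instance orderTopology_withTop {α : Type*} [Preorder α] : OrderTopology (WithTop α) := ⟨rfl⟩

namespace AlmostClosedIn

variable {S : Type*} [LinearOrder S] [TopologicalSpace S] {I : Set S}

theorem nonempty_s11 (h : AlmostClosedIn I) : I.Nonempty := by
  obtain ⟨ℓ, hcl, -⟩ := h
  refine nonempty_iff_ne_empty.2 fun hI => ?_
  simp [hI] at hcl

theorem exists_gt_s11 [OrderClosedTopology S] (h : AlmostClosedIn I) {a : S} (ha : a ∈ I) :
    ∃ b ∈ I, a < b := by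
  obtain ⟨ℓ, hcl, hℓ, -⟩ := h
  by_contra! hmax
  have hℓ_mem : ℓ ∈ closure I := (hcl.symm ▸ mem_singleton ℓ : ℓ ∈ closure I \ I).1
  have hℓ_le : ℓ ≤ a := isClosed_Iic.closure_subset_iff.2 hmax hℓ_mem
  exact (hℓ a ha).not_ge hℓ_le

end AlmostClosedIn

namespace AlmostClosed

variable {J : Type*} [LinearOrder J] {I : Set J}

theorem nonempty_s11 (h : AlmostClosed I) : I.Nonempty :=
  image_nonempty.1 (AlmostClosedIn.nonempty_s11 h)

theorem noMaxOrder_s11 (h : AlmostClosed I) : NoMaxOrder I := by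
  refine ⟨fun ⟨a, ha⟩ => ?_⟩
  obtain ⟨_, ⟨b, hb, rfl⟩, hab⟩ := AlmostClosedIn.exists_gt_s11 h (mem_image_of_mem _ ha)
  exact ⟨⟨b, hb⟩, Subtype.mk_lt_mk.2 (WithTop.coe_lt_coe.1 hab)⟩

end AlmostClosed

theorem stmt11_general {J : Type v} [LinearOrder J] [WellFoundedLT J] {X : Type u} [TopologicalSpace X]
    (hX : IsJConvergence J X) : TransfiniteSequential.{v} X := by
  intro A hA
  obtain ⟨I, hI, f, hf, hfA, hf_top⟩ := hX A hA
  exact ⟨I, inferInstance, inferInstance, hI.nonempty_s11.to_subtype, hI.noMaxOrder_s11, f,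
    continuous_le_dom (directedTopology_le_withTopOrderTopology I) hf, hfA, hf_top⟩

theorem stmt11 {J : Type v} [LinearOrder J] [WellFoundedLT J] [TopologicalSpace J]
    [OrderTopology J] [NoncompactSpace J] {X : Type u} [TopologicalSpace X]
    (hX : IsJConvergence J X) : TransfiniteSequential.{v} X :=
  stmt11_general hX
end

section
/- Suppose X is a Hausdorff topological space and there exists a countably infinite subset A ⊆ X such that A is not closed in X and every sequence of points of A that converges in X is eventually constant. Then X is not a transfinite sequential space. -/
open Set Topology TopologicalSpace

universe u v w

/-!
In the directed topology the neighbourhoods of `∞` are the final segments, so a transfinite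
witness `f` for `A` gives a net `j ↦ f j` in `A` converging to `f ∞ ∉ A`. In a `T₁` space each
point `a ∈ A` is eventually avoided by this net, say beyond `b a`; as every `j` satisfies
`j < b (f j)`, the countably many indices `b a` are cofinal, so some sequence `u` tends to `∞`
in the index set. Then `f ∘ u` is a convergent sequence in `A`, hence eventually constant, and
its limit `f ∞` lies in `A`.
-/

open Filter

theorem tendsto_coe_nhds_top_directedTopology {J : Type*} [Preorder J] [NoMaxOrder J] :
    Tendsto (fun j : J => (j : WithTop J)) atTop (@nhds _ (directedTopology J) ⊤) := by
  rw [directedTopology, nhds_generateFrom]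
  simp only [tendsto_iInf, tendsto_principal]
  rintro s ⟨hs, ⟨j, rfl⟩ | ⟨j, rfl⟩⟩
  · exact absurd hs WithTop.top_ne_coe
  · exact mem_of_superset (Ioi_mem_atTop j) fun k hk => WithTop.coe_lt_coe.2 hk

theorem exists_countable_cofinal_of_tendsto {J X : Type*} [LinearOrder J] [Nonempty J]
    [TopologicalSpace X] [T1Space X] {A : Set X} {F : J → X} {x : X} (hA : A.Countable)
    (hFA : ∀ j, F j ∈ A) (hF : Tendsto F atTop (𝓝 x)) (hx : x ∉ A) :
    ∃ s : Set J, s.Countable ∧ ∀ j, ∃ c ∈ s, j ≤ c := by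
  have hbound (a : A) : ∃ b : J, ∀ k ≥ b, F k ≠ a :=
    eventually_atTop.1 (hF.eventually_ne fun h => hx (h ▸ a.2))
  choose b hb using hbound
  have : Countable A := hA.to_subtype
  refine ⟨range b, countable_range b, fun j => ⟨b ⟨F j, hFA j⟩, mem_range_self _, ?_⟩⟩
  by_contra! hlt
  exact hb ⟨F j, hFA j⟩ j hlt.le rfl

theorem exists_seq_tendsto_atTop_of_countable_cofinal {J : Type*} [SemilatticeSup J]
    [Nonempty J] {s : Set J} (hs : s.Countable) (hcof : ∀ j, ∃ c ∈ s, j ≤ c) :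
    ∃ u : ℕ → J, Tendsto u atTop atTop := by
  obtain ⟨c, hc, -⟩ := hcof (Classical.arbitrary J)
  obtain ⟨e, rfl⟩ := hs.exists_eq_range ⟨c, hc⟩
  refine ⟨partialSups e, tendsto_atTop_atTop_of_monotone (partialSups e).monotone fun j => ?_⟩
  obtain ⟨_, ⟨n, rfl⟩, hj⟩ := hcof j
  exact ⟨n, hj.trans (le_partialSups e n)⟩

theorem stmt14_general {X : Type u} [TopologicalSpace X] [T2Space X] (A : Set X)
    (hcount : A.Countable) (hA : ¬ IsClosed A)
    (hseq : ∀ u : ℕ → X, (∀ n, u n ∈ A) → ∀ x : X,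
      Filter.Tendsto u Filter.atTop (nhds x) → ∃ N, ∀ n ≥ N, u n = u N) :
    ¬ TransfiniteSequential.{v} X := by
  intro hTS
  obtain ⟨J, _, -, _, _, f, hf, hfA, hf_top⟩ := hTS A hA
  have hF : Tendsto (fun j : J => f j) atTop (𝓝 (f ⊤)) :=
    (@Continuous.tendsto _ _ (directedTopology J) _ f hf ⊤).comp
      tendsto_coe_nhds_top_directedTopology
  obtain ⟨s, hs, hcof⟩ := exists_countable_cofinal_of_tendsto hcount hfA hF hf_top
  obtain ⟨u, hu⟩ := exists_seq_tendsto_atTop_of_countable_cofinal hs hcof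
  obtain ⟨N, hN⟩ := hseq _ (fun n => hfA (u n)) _ (hF.comp hu)
  have hlim : f ⊤ = f (u N) :=
    tendsto_nhds_unique (hF.comp hu)
      (tendsto_const_nhds.congr' (eventually_atTop.2 ⟨N, fun n hn => (hN n hn).symm⟩))
  exact hf_top (hlim ▸ hfA (u N))

theorem stmt14 {X : Type u} [TopologicalSpace X] [T2Space X] (A : Set X)
    (hcount : A.Countable) (hinf : A.Infinite) (hA : ¬ IsClosed A)
    (hseq : ∀ u : ℕ → X, (∀ n, u n ∈ A) → ∀ x : X,
      Filter.Tendsto u Filter.atTop (nhds x) → ∃ N, ∀ n ≥ N, u n = u N) :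
    ¬ TransfiniteSequential.{v} X :=
  stmt14_general A hcount hA hseq
end

section
/- Let ω denote the natural numbers with the discrete topology and let X = βω be its Stone–Čech compactification. Then X is compactly generated but X is not a transfinite sequential space. -/
open Set Topology TopologicalSpace

universe u v w

/-! βℕ is compact Hausdorff, so it is its own compact test space. For the second part take
`A = ℕ`, which is dense and not closed in βℕ. A transfinite sequence in `ℕ` converging to
`p ∉ ℕ` is a net `m : J' → ℕ`. If some value is taken cofinally, `p` equals it. Otherwise each
value `n` is avoided beyond some `b n`; the `b n` cannot all be bounded, so `J'` has a cofinal
ω-sequence along which `m` becomes a sequence in `ℕ` converging to `p`. Such a sequence has an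
injective subsequence, and an injective sequence cannot converge in βℕ: its even- and
odd-indexed terms have disjoint closures. -/

open Filter

theorem compactlyGen_of_compactSpace {X : Type u} [TopologicalSpace X] [CompactSpace X]
    [T2Space X] : CompactlyGen.{u} X :=
  fun _ hA => ⟨X, inferInstance, inferInstance, inferInstance, id, continuous_id, hA⟩

section StoneCech

variable {α : Type*} [TopologicalSpace α]

theorem not_isClosed_range_stoneCechUnit [CompletelyRegularSpace α] [NoncompactSpace α] :
    ¬ IsClosed (range (stoneCechUnit : α → StoneCech α)) := by
  intro hclosed
  have hrange : range (stoneCechUnit : α → StoneCech α) = univ := by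
    rw [← hclosed.closure_eq, denseRange_stoneCechUnit.closure_range]
  have : IsCompact (univ : Set α) := by
    rw [isInducing_stoneCechUnit.isCompact_iff, image_univ, hrange]
    exact isCompact_univ
  exact noncompact_univ α this

variable [DiscreteTopology α]

theorem disjoint_closure_image_stoneCechUnit {s t : Set α} (hst : Disjoint s t) :
    Disjoint (closure (stoneCechUnit '' s)) (closure (stoneCechUnit '' t)) := by
  classical
  let χ : StoneCech α → Bool :=
    stoneCechExtend (continuous_of_discreteTopology (f := fun a => decide (a ∈ s)))
  have hχ : Continuous χ := continuous_stoneCechExtend _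
  have hχu (a : α) : χ (stoneCechUnit a) = decide (a ∈ s) := stoneCechExtend_stoneCechUnit _ a
  have hs : closure (stoneCechUnit '' s) ⊆ χ ⁻¹' {true} :=
    closure_minimal (by rintro _ ⟨a, ha, rfl⟩; simp [hχu, ha])
      ((isClosed_discrete _).preimage hχ)
  have ht : closure (stoneCechUnit '' t) ⊆ χ ⁻¹' {false} :=
    closure_minimal (by rintro _ ⟨a, ha, rfl⟩; simp [hχu, hst.notMem_of_mem_right ha])
      ((isClosed_discrete _).preimage hχ)
  exact (Disjoint.preimage χ (by simp)).mono hs ht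

theorem not_tendsto_stoneCechUnit_of_injective {b : ℕ → α} (hb : Function.Injective b)
    (p : StoneCech α) : ¬ Tendsto (stoneCechUnit ∘ b) atTop (𝓝 p) := by
  intro h
  have hmem {P : ℕ → Prop} (hP : ∃ᶠ n in atTop, P n) :
      p ∈ closure (stoneCechUnit '' (b '' {n | P n})) :=
    mem_closure_of_frequently_of_tendsto (hP.mono fun n hn => ⟨b n, ⟨n, hn, rfl⟩, rfl⟩) h
  have hdisj : Disjoint (b '' {n | Even n}) (b '' {n | Odd n}) :=
    (disjoint_image_iff hb).2 (disjoint_left.2 fun n he ho => Nat.not_even_iff_odd.2 ho he)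
  exact (disjoint_closure_image_stoneCechUnit hdisj).notMem_of_mem_left
    (hmem Nat.frequently_even) (hmem Nat.frequently_odd)

end StoneCech

theorem mem_range_stoneCechUnit_of_tendsto_nat {a : ℕ → ℕ} {p : StoneCech ℕ}
    (h : Tendsto (stoneCechUnit ∘ a) atTop (𝓝 p)) : p ∈ range stoneCechUnit := by
  by_contra hp
  have hfin (v : ℕ) : ∀ᶠ n in atTop, a n ≠ v := by
    refine not_frequently.1 fun hv => hp ⟨v, ?_⟩
    exact tendsto_nhds_unique_of_frequently_eq tendsto_const_nhds h
      (hv.mono fun n hn => by simp [hn])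
  have ha : Tendsto a atTop atTop := tendsto_atTop.2 fun c =>
    ((eventually_all_finite (finite_Iio c)).2 fun v _ => hfin v).mono
      fun n hn => not_lt.1 fun hlt => hn (a n) hlt rfl
  obtain ⟨φ, hφ, haφ⟩ := strictMono_subseq_of_tendsto_atTop ha
  exact not_tendsto_stoneCechUnit_of_injective haφ.injective p (h.comp hφ.tendsto_atTop)

theorem frequently_eq_or_exists_tendsto_atTop {J : Type*} [LinearOrder J] [Nonempty J]
    (m : J → ℕ) : (∃ n, ∃ᶠ j in atTop, m j = n) ∨ ∃ s : ℕ → J, Tendsto s atTop atTop := by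
  by_contra! ⟨hfreq, hseq⟩
  simp only [eventually_atTop] at hfreq
  choose b hb using hfreq
  by_cases hbdd : BddAbove (range b)
  · obtain ⟨c, hc⟩ := hbdd
    exact hb (m c) c (hc (mem_range_self _)) rfl
  · refine hseq (partialSups b) (tendsto_atTop_atTop_of_monotone (partialSups b).monotone
      fun c => ?_)
    obtain ⟨_, ⟨n, rfl⟩, hn⟩ := not_bddAbove_iff.1 hbdd c
    exact ⟨n, hn.le.trans (le_partialSups b n)⟩

theorem mem_range_stoneCechUnit_of_tendsto_atTop {J : Type*} [LinearOrder J] [Nonempty J]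
    {m : J → ℕ} {p : StoneCech ℕ} (h : Tendsto (stoneCechUnit ∘ m) atTop (𝓝 p)) :
    p ∈ range stoneCechUnit := by
  obtain ⟨n, hn⟩ | ⟨s, hs⟩ := frequently_eq_or_exists_tendsto_atTop m
  · exact ⟨n, tendsto_nhds_unique_of_frequently_eq tendsto_const_nhds h
      (hn.mono fun j hj => by simp [hj])⟩
  · exact mem_range_stoneCechUnit_of_tendsto_nat (h.comp hs)

theorem tendsto_atTop_of_continuous_directedTopology {J X : Type*} [Preorder J] [NoMaxOrder J]
    [TopologicalSpace X] {f : WithTop J → X} (hf : Continuous[directedTopology J, _] f) :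
    Tendsto (fun j : J => f j) atTop (𝓝 (f ⊤)) := by
  have hsome : Tendsto WithTop.some atTop (@nhds _ (directedTopology J) ⊤) := by
    rw [directedTopology, nhds_generateFrom]
    simp only [tendsto_iInf, tendsto_principal]
    rintro _ ⟨htop, ⟨j, rfl⟩ | ⟨j, rfl⟩⟩
    · exact absurd htop WithTop.top_ne_coe
    · exact mem_of_superset (Ioi_mem_atTop j) fun k hk => WithTop.coe_lt_coe.2 hk
  exact (@Continuous.tendsto _ _ (directedTopology J) _ f hf ⊤).comp hsome

theorem not_transfiniteWitness_range_stoneCechUnit (J : Type*) [LinearOrder J] :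
    ¬ TransfiniteWitness J (StoneCech ℕ) (range stoneCechUnit) := by
  rintro ⟨-, _, _, f, hf, hrange, htop⟩
  choose m hm using hrange
  refine htop (mem_range_stoneCechUnit_of_tendsto_atTop (m := m) ?_)
  simpa only [Function.comp_def, hm] using tendsto_atTop_of_continuous_directedTopology hf

theorem stmt15 :
    CompactlyGen.{0} (StoneCech ℕ) ∧ ¬ TransfiniteSequential.{v} (StoneCech ℕ) := by
  refine ⟨compactlyGen_of_compactSpace, fun h => ?_⟩
  obtain ⟨J, _, hJ⟩ := h _ not_isClosed_range_stoneCechUnit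
  exact not_transfiniteWitness_range_stoneCechUnit J hJ
end

section
/- Let J be an unbounded well-ordered set in which every countable subset is bounded (for example, J = ω₁, the set of countable ordinals), and let X = J ∪ {∞_J} be its successor equipped with the directed topology. Then X is a transfinite sequential space but X is not compactly generated. -/
open Set Topology TopologicalSpace

universe u v w

/-! A set is closed in the directed topology exactly when it contains `∞` or is bounded in `J`,
so a non-closed `A` is cofinal in `J`, and `A ∩ J` itself, with its inclusion into `J`, is a
transfinite sequence converging to `∞ ∉ A`. Since `Iic j` is closed and discrete, a compact set meets
each `Iic j` in a finite set; as every countable subset of `J` is bounded, the compact sets are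
finite. A continuous map from a compact space therefore has finite image in a `T₁` space, so all
preimages are closed, while `J` is not closed. -/

section DirectedTopology

attribute [-instance] withTopOrderTopology
attribute [local instance] directedTopology

variable {J : Type*} [LinearOrder J]

theorem isOpen_directedTopology_iff [Nonempty J] {S : Set (WithTop J)} :
    IsOpen S ↔ (⊤ ∈ S → ∃ j : J, Ioi (j : WithTop J) ⊆ S) := by
  constructor
  · intro hS
    induction hS with
    | basic s hs =>
      rcases hs with ⟨j, rfl⟩ | ⟨j, rfl⟩
      · simp
      · exact fun _ => ⟨j, subset_rfl⟩
    | univ => exact fun _ => ⟨Classical.arbitrary J, subset_univ _⟩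
    | inter s t _ _ ihs iht =>
      rintro ⟨hs, ht⟩
      obtain ⟨j₁, hj₁⟩ := ihs hs
      obtain ⟨j₂, hj₂⟩ := iht ht
      exact ⟨max j₁ j₂, subset_inter
        ((Ioi_subset_Ioi (WithTop.coe_le_coe.2 (le_max_left j₁ j₂))).trans hj₁)
        ((Ioi_subset_Ioi (WithTop.coe_le_coe.2 (le_max_right j₁ j₂))).trans hj₂)⟩
    | sUnion 𝒮 _ ih =>
      rintro ⟨t, ht, htop⟩
      obtain ⟨j, hj⟩ := ih t ht htop
      exact ⟨j, hj.trans (subset_sUnion_of_mem ht)⟩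
  · refine fun h => isOpen_iff_forall_mem_open.2 fun x hx => ?_
    induction x using WithTop.recTopCoe with
    | top =>
      obtain ⟨j, hj⟩ := h hx
      exact ⟨_, hj, .basic _ (.inr ⟨j, rfl⟩), WithTop.coe_lt_top j⟩
    | coe j => exact ⟨_, singleton_subset_iff.2 hx, .basic _ (.inl ⟨j, rfl⟩), rfl⟩

theorem not_isClosed_directedTopology_iff [Nonempty J] {A : Set (WithTop J)} :
    ¬IsClosed A ↔ ⊤ ∉ A ∧ ∀ j : J, ∃ a : J, j < a ∧ (a : WithTop J) ∈ A := by
  rw [← isOpen_compl_iff, isOpen_directedTopology_iff]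
  simp +contextual [not_subset, WithTop.exists]

theorem continuous_withTopMap_directedTopology {J' : Type*} [LinearOrder J'] [Nonempty J]
    {g : J' → J} (hg : Monotone g) (hcof : ∀ j, ∃ j', j < g j') :
    Continuous (WithTop.map g) := by
  have : Nonempty J' := ⟨(hcof (Classical.arbitrary J)).choose⟩
  refine continuous_def.2 fun S hS => isOpen_directedTopology_iff.2 fun htop => ?_
  obtain ⟨j, hj⟩ := isOpen_directedTopology_iff.1 hS htop
  obtain ⟨j', hj'⟩ := hcof j
  refine ⟨j', fun x hx => hj ?_⟩
  induction x using WithTop.recTopCoe with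
  | top => exact WithTop.coe_lt_top j
  | coe b => exact WithTop.coe_lt_coe.2 (hj'.trans_le (hg (WithTop.coe_lt_coe.1 hx).le))

theorem transfiniteWitness_directedTopology [WellFoundedLT J] [Nonempty J]
    {A : Set (WithTop J)} (hA : ¬IsClosed A) :
    TransfiniteWitness {a : J | (a : WithTop J) ∈ A} (WithTop J) A := by
  obtain ⟨htop, hcof⟩ := not_isClosed_directedTopology_iff.1 hA
  have hcof' : ∀ j : J, ∃ a : {a : J | (a : WithTop J) ∈ A}, j < a := fun j =>
    let ⟨a, hja, ha⟩ := hcof j; ⟨⟨a, ha⟩, hja⟩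
  refine ⟨inferInstance, ⟨(hcof' (Classical.arbitrary J)).choose⟩,
    ⟨fun a => hcof' a⟩, WithTop.map Subtype.val,
    continuous_withTopMap_directedTopology (Subtype.mono_coe _) hcof', fun a => a.2, htop⟩

theorem transfiniteSequential_directedTopology {J : Type u} [LinearOrder J] [WellFoundedLT J]
    [Nonempty J] : TransfiniteSequential.{u} (WithTop J) :=
  fun _ hA => ⟨_, inferInstance, transfiniteWitness_directedTopology hA⟩

theorem t1Space_directedTopology [Nonempty J] : T1Space (WithTop J) := by
  refine ⟨fun x => isOpen_compl_iff.1 (isOpen_directedTopology_iff.2 fun htop => ?_)⟩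
  induction x using WithTop.recTopCoe with
  | top => exact absurd rfl htop
  | coe j => exact ⟨j, fun y hy => hy.ne'⟩

theorem isDiscrete_range_coe_directedTopology :
    IsDiscrete (range ((↑) : J → WithTop J)) := by
  refine isDiscrete_iff_forall_mem_exists_isOpen.2 ?_
  rintro _ ⟨j, rfl⟩
  exact ⟨_, .basic _ (.inl ⟨j, rfl⟩), singleton_inter_of_mem (mem_range_self j)⟩

theorem IsCompact.finite_directedTopology [Nonempty J]
    (hcb : ∀ S : Set J, S.Countable → BddAbove S) {C : Set (WithTop J)} (hC : IsCompact C) :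
    C.Finite := by
  have hfinite_Iic (s : J) : (C ∩ Iic (s : WithTop J)).Finite := by
    refine (hC.inter_right ?_).finite (isDiscrete_range_coe_directedTopology.mono ?_)
    · rw [← isOpen_compl_iff, compl_Iic]
      exact .basic _ (.inr ⟨s, rfl⟩)
    · rintro x ⟨-, hx⟩
      exact WithTop.ne_top_iff_exists.1 (ne_top_of_le_ne_top WithTop.coe_ne_top hx)
  have hfin : {a : J | (a : WithTop J) ∈ C}.Finite := by
    by_contra hinf
    let e := Set.Infinite.natEmbedding _ hinf
    have hinj : Function.Injective fun n => (e n : J) :=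
      Subtype.val_injective.comp e.injective
    obtain ⟨s, hs⟩ := hcb _ (countable_range fun n => (e n : J))
    refine infinite_range_of_injective hinj
      (((hfinite_Iic s).preimage WithTop.coe_injective.injOn).subset ?_)
    rintro _ ⟨n, rfl⟩
    exact ⟨(e n).2, WithTop.coe_le_coe.2 (hs (mem_range_self n))⟩
  refine ((hfin.image ((↑) : J → WithTop J)).insert ⊤).subset fun x hx => ?_
  induction x using WithTop.recTopCoe with
  | top => exact mem_insert _ _
  | coe a => exact mem_insert_of_mem _ (mem_image_of_mem _ hx)

theorem not_discreteTopology_directedTopology [Nonempty J] [NoMaxOrder J] :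
    ¬DiscreteTopology (WithTop J) := fun _ => by
  obtain ⟨j, hj⟩ := isOpen_directedTopology_iff.1 (isOpen_discrete {(⊤ : WithTop J)}) rfl
  obtain ⟨a, ha⟩ := exists_gt j
  exact WithTop.coe_ne_top (hj (WithTop.coe_lt_coe.2 ha))

end DirectedTopology

theorem CompactlyGen.discreteTopology {X : Type*} [TopologicalSpace X] [T1Space X]
    (hX : CompactlyGen.{v} X) (hfin : ∀ C : Set X, IsCompact C → C.Finite) :
    DiscreteTopology X := by
  refine discreteTopology_iff_forall_isClosed.2 fun A => by_contra fun hA => ?_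
  obtain ⟨K, _, _, -, f, hf, hnc⟩ := hX A hA
  rw [← preimage_inter_range] at hnc
  exact hnc (((hfin _ (isCompact_range hf)).subset inter_subset_right).isClosed.preimage hf)

theorem stmt16 {J : Type u} [LinearOrder J] [WellFoundedLT J] [Nonempty J] [NoMaxOrder J]
    (hcb : ∀ S : Set J, S.Countable → BddAbove S) :
    @TransfiniteSequential.{u} (WithTop J) (directedTopology J) ∧
      ¬ @CompactlyGen.{v} (WithTop J) (directedTopology J) := by
  let _ : TopologicalSpace (WithTop J) := directedTopology J
  have := t1Space_directedTopology (J := J)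
  refine ⟨transfiniteSequential_directedTopology, fun hcg => ?_⟩
  exact not_discreteTopology_directedTopology
    (hcg.discreteTopology fun _ hC => hC.finite_directedTopology hcb)
end

section
/- Fix a non-compact well-ordered space J and let X be a J-convergence space. Then the following are equivalent: (1) X is a J-unique convergence space; (2) X is a KC-space; (3) X is weakly Hausdorff; (4) the diagonal Δ = {(x,x) : x ∈ X} is closed in the J-product X ×_J X. -/
open Set Topology TopologicalSpace

universe u v w

/-!
Everything runs through the property that every continuous image of a compactification
`I ∪ {∞_I}` is closed. In a KC space such images are compact, hence closed. Conversely, closed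
images and closed singletons force unique limits: if `f` and `g` agree on `I`, then `g ∞_I`
lies in every closed set `f [i, ∞_I]`, so `f` takes the value `g ∞_I` cofinally often.

A `J`-closed set pulls back to a closed subset of `I ∪ {∞_I}`, because every almost closed
piece of `I ∪ {∞_I}` can be reindexed by an almost closed subset of `J`. Hence the `J`-open sets
form a topology, and the diagonal is closed in `X ×_J X` iff it is `J`-closed, i.e. iff `X` is
`J`-unique. For the hard direction, let `h(I₂) ⊆ f(I₁ ∪ {∞})` and choose `μ z` with
`h z = f (μ z)`, and let `a₀` be the liminf of `μ`. Either `μ = a₀` cofinally often, or the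
records of `μ` below `a₀` that are not limits of earlier records form a set `A` with
`h = f ∘ μ` on `A`. Reindexing the closure of `A` and applying `J`-closedness of the diagonal
gives `h (sup A) = f a₀`. In both cases `h` takes the value `f a₀` cofinally often, so
`h ∞ = f a₀`.
-/

open Order

theorem almostClosedIn_of_closure_diff {α : Type*} [LinearOrder α] [TopologicalSpace α]
    [OrderClosedTopology α] {D : Set α} {ℓ : α} (hlt : ∀ d ∈ D, d < ℓ)
    (h : closure D \ D = {ℓ}) : AlmostClosedIn D :=
  ⟨ℓ, h, hlt, fun _ hs => closure_minimal (fun d hd => (hs d hd).le) isClosed_Iic (h.superset rfl).1⟩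

section WellOrder

variable {α : Type*} [LinearOrder α] [WellFoundedLT α]

theorem WellFoundedLT.exists_isLUB {s : Set α} (hs : BddAbove s) : ∃ a, IsLUB s a :=
  ⟨wellFounded_lt.min _ hs, wellFounded_lt.min_mem _ hs, fun _ hb => wellFounded_lt.min_le hb⟩

variable [TopologicalSpace α] [OrderTopology α]

theorem mem_closure_inter_Iio {s : Set α} {p : α} (hp : p ∈ closure s) (hps : p ∉ s) :
    p ∈ closure (s ∩ Iio p) :=
  closure_mono (t := s ∩ Iio p) (fun _ hx => ⟨hx.1, hx.2.lt_of_ne fun h => hps (h ▸ hx.1)⟩)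
    ((isLowerSet_Iic p).isOpen.closure_inter ⟨hp, mem_Iic.2 le_rfl⟩)

theorem closure_diff_closure_inter_Iio {s : Set α} {p : α} (hp : p ∈ closure s) (hps : p ∉ s) :
    closure (closure s ∩ Iio p) \ (closure s ∩ Iio p) = {p} := by
  refine Subset.antisymm (fun x ⟨hx, hxD⟩ => ?_) ?_
  · have hxs : x ∈ closure s := closure_minimal inter_subset_left isClosed_closure hx
    have hxp : x ≤ p := closure_minimal (fun y hy => hy.2.le) isClosed_Iic hx
    exact hxp.eq_of_not_lt fun hlt => hxD ⟨hxs, hlt⟩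
  · rintro x rfl
    exact ⟨closure_mono (inter_subset_inter_left _ subset_closure) (mem_closure_inter_Iio hp hps),
      fun h => lt_irrefl _ h.2⟩

theorem isClosed_of_forall_almostClosedIn {s : Set α}
    (h : ∀ D ⊆ s, AlmostClosedIn D → closure D \ D ⊆ s) : IsClosed s := by
  by_contra hs
  obtain ⟨p, ⟨hp, hps⟩, hmin⟩ := wellFounded_lt.has_min (closure s \ s)
    (sdiff_nonempty.2 (mt closure_subset_iff_isClosed.1 hs))
  have hsub : closure s ∩ Iio p ⊆ s := fun x ⟨hx, hxp⟩ => by_contra fun hxs => hmin x ⟨hx, hxs⟩ hxp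
  have hdiff := closure_diff_closure_inter_Iio hp hps
  exact hps (h _ hsub (almostClosedIn_of_closure_diff (fun d hd => hd.2) hdiff)
    (hdiff.superset rfl))

theorem Monotone.continuous_of_isLUB_image_Iio {β : Type*} [LinearOrder β] [TopologicalSpace β]
    [OrderTopology β] {f : α → β} (hf : Monotone f)
    (hlim : ∀ a, IsSuccLimit a → IsLUB (f '' Iio a) (f a)) : Continuous f := by
  rw [OrderTopology.continuous_iff]
  refine fun b => ⟨?_, ((isLowerSet_Iio b).preimage hf).isOpen⟩
  rw [← isClosed_compl_iff, ← preimage_compl, compl_Ioi]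
  obtain h | ⟨a, ha⟩ := ((isLowerSet_Iic b).preimage hf).eq_univ_or_Iio
  · exact h ▸ isClosed_univ
  rw [ha]
  by_cases hlima : IsSuccLimit a
  · have : a ∈ f ⁻¹' Iic b := (hlim a hlima).2 fun _ ⟨x, hx, hfx⟩ => hfx ▸ (ha.symm ▸ hx :)
    exact absurd (ha ▸ this : a ∈ Iio a) (lt_irrefl a)
  rcases not_isSuccLimit_iff.1 hlima with hmin | hpre
  · rw [hmin.Iio_eq]; exact isClosed_empty
  · obtain ⟨c, hc⟩ := not_isSuccPrelimit_iff.1 hpre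
    rw [hc.Iio_eq]; exact isClosed_Iic

theorem isNormal_of_isClosed_range {γ : Type*} [LinearOrder γ] {f : γ → α} (hf : StrictMono f)
    (hr : IsClosed (range f)) : IsNormal f := by
  refine isNormal_iff.2 ⟨hf, fun o ho a ha => ?_⟩
  obtain ⟨m, hm⟩ := WellFoundedLT.exists_isLUB (s := f '' Iio o)
    ⟨f o, by rintro _ ⟨x, hx, rfl⟩; exact (hf hx).le⟩
  obtain ⟨c, rfl⟩ : m ∈ range f := hr.closure_subset
    (closure_mono (image_subset_range _ _) (hm.mem_closure (ho.nonempty_Iio.image f)))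
  have hoc : o ≤ c := le_of_not_gt fun hco => by
    obtain ⟨x, hxo, hcx⟩ := ho.isSuccPrelimit.lt_iff_exists_lt.1 hco
    exact (hf hcx).not_ge (hm.1 ⟨x, hxo, rfl⟩)
  exact (hf.monotone hoc).trans (hm.2 (by rintro _ ⟨x, hx, rfl⟩; exact ha x hx))

theorem exists_gt_notMem_closure_inter_Iio {A : Set α} {u : α} (h : ∃ q ∈ A, u < q) :
    ∃ q ∈ A, u < q ∧ q ∉ closure (A ∩ Iio q) := by
  obtain ⟨q, ⟨hqA, huq⟩, hmin⟩ := wellFounded_lt.has_min (A ∩ Ioi u)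
    (let ⟨q, hq, huq⟩ := h; ⟨q, hq, huq⟩)
  refine ⟨q, hqA, huq, fun hq => huq.not_ge (closure_minimal ?_ isClosed_Iic hq)⟩
  exact fun x ⟨hxA, hxq⟩ => le_of_not_gt fun hux => hmin x ⟨hxA, hux⟩ hxq

theorem exists_isolated_monotoneOn_isLUB_image {β : Type*} [LinearOrder β] {μ : α → β} {a0 : β}
    {zb : α} (ha0 : ∃ b, b < a0) (hcof : ∀ b < a0, ∃ z, zb < z ∧ b < μ z ∧ μ z < a0) :
    ∃ A ⊆ Ioi zb, A.Nonempty ∧ (∀ a ∈ A, ∃ a' ∈ A, a < a') ∧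
      (∀ a ∈ A, a ∉ closure (A ∩ Iio a)) ∧ MonotoneOn μ A ∧ IsLUB (μ '' A) a0 := by
  set R := {z | zb < z ∧ μ z < a0 ∧ ∀ w, zb < w → w < z → μ w < a0 → μ w < μ z}
  have hRmono : StrictMonoOn μ R := fun r hr r' hr' hrr' => hr'.2.2 r hr.1 hrr' hr.2.1
  -- the first index after `zb` at which `μ` exceeds `b` is a record
  have hRcof : ∀ b < a0, ∃ r ∈ R, b < μ r := by
    intro b hb
    obtain ⟨r, ⟨hzr, hbr, hra⟩, hmin⟩ := wellFounded_lt.has_min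
      {z | zb < z ∧ b < μ z ∧ μ z < a0} (let ⟨z, hz⟩ := hcof b hb; ⟨z, hz⟩)
    exact ⟨r, ⟨hzr, hra, fun w hzw hwr hwa =>
      lt_of_not_ge fun hrw => hmin w ⟨hzw, hbr.trans_le hrw, hwa⟩ hwr⟩, hbr⟩
  set A := {r ∈ R | r ∉ closure (R ∩ Iio r)}
  have hAcof : ∀ b < a0, ∃ a ∈ A, b < μ a := by
    intro b hb
    obtain ⟨r, hr, hbr⟩ := hRcof b hb
    obtain ⟨r', hr', hrr'⟩ := hRcof (μ r) hr.2.1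
    obtain ⟨a, haR, hra, hiso⟩ :=
      exists_gt_notMem_closure_inter_Iio ⟨r', hr', (hRmono.lt_iff_lt hr hr').1 hrr'⟩
    exact ⟨a, ⟨haR, hiso⟩, hbr.trans (hRmono hr haR hra)⟩
  refine ⟨A, fun a ha => ha.1.1, ?_, fun a ha => ?_, fun a ha hcl => ?_,
    (hRmono.mono fun x hx => hx.1).monotoneOn, ?_⟩
  · obtain ⟨b, hb⟩ := ha0
    obtain ⟨a, ha, -⟩ := hAcof b hb
    exact ⟨a, ha⟩
  · obtain ⟨a', ha', h⟩ := hAcof (μ a) ha.1.2.1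
    exact ⟨a', ha', (hRmono.lt_iff_lt ha.1 ha'.1).1 h⟩
  · exact ha.2 (closure_mono (inter_subset_inter_left _ fun x hx => hx.1) hcl)
  · refine ⟨by rintro _ ⟨a, ha, rfl⟩; exact ha.1.2.1.le, fun u hu => le_of_not_gt fun hua => ?_⟩
    obtain ⟨a, ha, hlt⟩ := hAcof u hua
    exact (hu ⟨a, ha, rfl⟩).not_gt hlt

theorem Order.IsNormal.continuous_comp_of_leftIsolated {γ β : Type*} [LinearOrder γ]
    [WellFoundedLT γ] [TopologicalSpace γ] [OrderTopology γ] [LinearOrder β] [TopologicalSpace β]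
    [OrderTopology β]
    {A : Set α} {φ ψ : α → β} {e : γ → α} (he : IsNormal e) (hAe : A ⊆ range e)
    (heA : range e ⊆ closure A) (hAiso : ∀ a ∈ A, a ∉ closure (A ∩ Iio a))
    (hψmono : Monotone ψ) (hψA : EqOn ψ φ A) (hψ : ∀ q, IsLUB (φ '' (A ∩ Iic q)) (ψ q)) :
    Continuous (ψ ∘ e) := by
  refine (hψmono.comp he.monotone).continuous_of_isLUB_image_Iio fun a ha => ?_
  have hsub : e '' Iio a ⊆ closure A ∩ Iio (e a) := by
    rintro _ ⟨x, hx, rfl⟩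
    exact ⟨heA (mem_range_self x), he.strictMono hx⟩
  have heaA : e a ∉ A := fun heaA => hAiso _ heaA <|
    closure_minimal ((isLowerSet_Iio _).isOpen.closure_inter) isClosed_closure <|
      closure_mono hsub ((he.isLUB_image_Iio_of_isSuccLimit ha).mem_closure
        (ha.nonempty_Iio.image e))
  refine ⟨fun _ ⟨x, hx, hxe⟩ => hxe ▸ hψmono (he.strictMono hx).le, fun u hu => ?_⟩
  refine (hψ (e a)).2 ?_
  rintro _ ⟨x, ⟨hxA, hxe⟩, rfl⟩
  obtain ⟨s, rfl⟩ := hAe hxA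
  have hsa : s < a := he.strictMono.lt_iff_lt.1 (hxe.lt_of_ne fun h => heaA (h ▸ hxA))
  exact hψA hxA ▸ hu ⟨s, hsa, rfl⟩

end WellOrder

theorem MonotoneOn.exists_monotone_isLUB {α β : Type*} [Preorder α] [LinearOrder β]
    [WellFoundedLT β] [OrderTop β] {A : Set α} {φ : α → β} (hφ : MonotoneOn φ A) :
    ∃ ψ : α → β, Monotone ψ ∧ EqOn ψ φ A ∧ ∀ q, IsLUB (φ '' (A ∩ Iic q)) (ψ q) := by
  choose ψ hψ using fun q => WellFoundedLT.exists_isLUB (OrderTop.bddAbove (φ '' (A ∩ Iic q)))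
  refine ⟨ψ, fun q q' hqq' => ?_, fun a ha => ?_, hψ⟩
  · exact (hψ q).mono (hψ q') (image_mono (inter_subset_inter_right _ (Iic_subset_Iic.2 hqq')))
  · exact (hψ a).unique (IsGreatest.isLUB ⟨⟨a, ⟨ha, mem_Iic.2 le_rfl⟩, rfl⟩,
      by rintro _ ⟨x, ⟨hxA, hxa⟩, rfl⟩; exact hφ hxA ha hxa⟩)

section WithTop

instance {β : Type*} [Preorder β] : OrderTopology (WithTop β) := ⟨rfl⟩

instance {β : Type*} [LinearOrder β] [WellFoundedLT β] : CompactSpace (WithTop β) := by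
  let := WellFoundedLT.toOrderBot (WithTop β)
  let := WellFoundedLT.conditionallyCompleteLinearOrderBot (WithTop β)
  exact ⟨isCompact_Icc.of_isClosed_subset isClosed_univ fun x _ => ⟨bot_le, le_top (a := x)⟩⟩

def extendTop {β α : Type*} (φ : β → α) (ℓ : α) : WithTop β → α := WithTop.recTopCoe ℓ φ

variable {β α : Type*} {φ : β → α} {ℓ : α}

theorem range_extendTop : range (extendTop φ ℓ) = insert ℓ (range φ) := by
  simp [Set.ext_iff, WithTop.exists, eq_comm, extendTop]

theorem extendTop_strictMono [Preorder β] [Preorder α] (hφ : StrictMono φ) (hℓ : ∀ b, φ b < ℓ) :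
    StrictMono (extendTop φ ℓ) := by
  intro x y hxy
  induction y using WithTop.recTopCoe with
  | top =>
    lift x to β using hxy.ne
    exact hℓ x
  | coe y =>
    lift x to β using (hxy.trans (WithTop.coe_lt_top y)).ne
    exact hφ (WithTop.coe_lt_coe.1 hxy)

theorem isNormal_extendTop [LinearOrder β] [LinearOrder α] [WellFoundedLT α] [TopologicalSpace α]
    [OrderTopology α] (hφ : StrictMono φ) (hℓ : ∀ b, φ b < ℓ)
    (hcl : closure (range φ) \ range φ = {ℓ}) : IsNormal (extendTop φ ℓ) := by
  refine isNormal_of_isClosed_range (extendTop_strictMono hφ hℓ) ?_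
  rw [range_extendTop, ← singleton_union, ← hcl, sdiff_union_of_subset subset_closure]
  exact isClosed_closure

theorem isClosedEmbedding_extendTop [LinearOrder β] [WellFoundedLT β] [LinearOrder α]
    [WellFoundedLT α] [TopologicalSpace α] [OrderTopology α] (hφ : StrictMono φ)
    (hℓ : ∀ b, φ b < ℓ) (hcl : closure (range φ) \ range φ = {ℓ}) :
    IsClosedEmbedding (extendTop φ ℓ) :=
  (isNormal_extendTop hφ hℓ hcl).continuous.isClosedEmbedding
    (extendTop_strictMono hφ hℓ).injective

theorem WithTop.top_mem_of_isClosed [LinearOrder β] [Nonempty β] {P : Set (WithTop β)}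
    (hP : IsClosed P) (h : ∀ b : β, ∃ x ∈ P, (b : WithTop β) < x) : ⊤ ∈ P := by
  refine hP.closure_subset ((mem_closure_iff_nhds_basis nhds_top_basis).2 fun a ha => ?_)
  lift a to β using ha.ne
  exact h a

end WithTop

namespace AlmostClosed

variable {J : Type*} [LinearOrder J] {I : Set J}

theorem nonempty_s19 (hI : AlmostClosed I) : Nonempty I := by
  obtain ⟨ℓ, hcl, -⟩ := hI
  obtain ⟨_, i, hi, -⟩ := closure_nonempty_iff.1 ⟨ℓ, (hcl.superset rfl).1⟩
  exact ⟨⟨i, hi⟩⟩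

theorem exists_gt (hI : AlmostClosed I) (i : I) : ∃ j : I, i < j := by
  obtain ⟨ℓ, hcl, hlt, -⟩ := hI
  by_contra! h
  have hsub : (fun j : J => (j : WithTop J)) '' I ⊆ Iic (i : J) := by
    rintro _ ⟨j, hj, rfl⟩
    exact WithTop.coe_le_coe.2 (h ⟨j, hj⟩)
  exact (hlt _ (mem_image_of_mem _ i.2)).not_ge
    (closure_minimal hsub isClosed_Iic (hcl.superset rfl).1)

theorem top_mem_of_isClosed (hI : AlmostClosed I) {P : Set (WithTop I)} (hP : IsClosed P)
    (h : ∀ i : I, ∃ x ∈ P, (i : WithTop I) ≤ x) : ⊤ ∈ P := by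
  have := hI.nonempty_s19
  refine WithTop.top_mem_of_isClosed hP fun i => ?_
  obtain ⟨j, hij⟩ := hI.exists_gt i
  obtain ⟨x, hx, hjx⟩ := h j
  exact ⟨x, hx, (WithTop.coe_lt_coe.2 hij).trans_le hjx⟩

theorem exists_reindex [WellFoundedLT J] (hI : AlmostClosed I) {D : Set (WithTop I)}
    (hD : AlmostClosedIn D) :
    ∃ S : Set J, AlmostClosed S ∧ ∃ e : WithTop S → WithTop I,
      IsNormal e ∧ range (fun s : S => e s) = D ∧ closure D \ D = {e ⊤} := by
  obtain ⟨ℓ, hcl, hlt, -⟩ := hI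
  obtain ⟨ℓD, hclD, hltD, -⟩ := hD
  have hcoe : StrictMono (fun i : I => ((i : J) : WithTop J)) :=
    fun _ _ h => WithTop.coe_lt_coe.2 h
  -- `ι` identifies `I ∪ {∞_I}` with the closure of `I` in `J ∪ {∞_J}`
  set ι := extendTop (fun i : I => ((i : J) : WithTop J)) ℓ
  have hιlt : ∀ i : I, ((i : J) : WithTop J) < ℓ := fun i => hlt _ (mem_image_of_mem _ i.2)
  have hι : IsClosedEmbedding ι :=
    isClosedEmbedding_extendTop hcoe hιlt (by rwa [← image_eq_range])
  let S : Set J := {j | ∃ h : j ∈ I, ((⟨j, h⟩ : I) : WithTop I) ∈ D}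
  let φ : S → WithTop I := fun s => ((⟨s, s.2.fst⟩ : I) : WithTop I)
  have hφ : StrictMono φ := fun _ _ h => WithTop.coe_lt_coe.2 h
  have hrange : range φ = D := by
    ext d
    refine ⟨by rintro ⟨s, rfl⟩; exact s.2.snd, fun hd => ?_⟩
    lift d to I using (hltD d hd).ne_top
    exact ⟨⟨d, d.2, hd⟩, rfl⟩
  have hS : (fun j : J => (j : WithTop J)) '' S = ι '' D := by
    rw [← hrange, ← range_comp, image_eq_range]
    rfl
  refine ⟨S, ?_, extendTop φ ℓD,
    isNormal_extendTop hφ (fun s => hltD _ (hrange ▸ mem_range_self s)) (hrange ▸ hclD),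
    hrange, hclD⟩
  show AlmostClosedIn _
  refine hS ▸ almostClosedIn_of_closure_diff (ℓ := ι ℓD) ?_ ?_
  · rintro _ ⟨d, hd, rfl⟩
    exact extendTop_strictMono hcoe hιlt (hltD d hd)
  · rw [hι.closure_image_eq, ← image_sdiff hι.injective, hclD, image_singleton]

end AlmostClosed

section JClosed

variable {J : Type*} [LinearOrder J] {X : Type*} [TopologicalSpace X]

theorem JClosedSet.isClosed_preimage [WellFoundedLT J] {C : Set X} (hC : JClosedSet J X C)
    {I : Set J} (hI : AlmostClosed I) {f : WithTop I → X} (hf : Continuous f) :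
    IsClosed (f ⁻¹' C) := by
  refine isClosed_of_forall_almostClosedIn fun D hDC hD => ?_
  obtain ⟨S, hS, e, he, hrange, hcl⟩ := hI.exists_reindex hD
  rw [hcl, singleton_subset_iff]
  exact hC S hS (f ∘ e) (hf.comp he.continuous) fun s => hDC (hrange ▸ mem_range_self s)

theorem JClosedSet.union [WellFoundedLT J] {A B : Set X} (hA : JClosedSet J X A)
    (hB : JClosedSet J X B) : JClosedSet J X (A ∪ B) := fun _ hI _ hf hfI =>
  hI.top_mem_of_isClosed ((hA.isClosed_preimage hI hf).union (hB.isClosed_preimage hI hf))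
    fun i => ⟨i, hfI i, le_rfl⟩

theorem isOpen_jTop_iff [WellFoundedLT J] {U : Set X} : IsOpen[jTop J X] U ↔ JOpenSet J X U := by
  refine ⟨fun hU => ?_, fun hU => isOpen_generateFrom_of_mem hU⟩
  induction (hU : GenerateOpen _ U) with
  | basic V hV => exact hV
  | univ =>
    intro I hI f _ hfI
    obtain ⟨i⟩ := hI.nonempty_s19
    simpa using hfI i
  | inter V W _ _ hV hW =>
    rw [JOpenSet, compl_inter]
    exact hV.union hW
  | sUnion S _ hS =>
    rintro I hI f hf hfI ⟨t, ht, hft⟩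
    exact hS t ht I hI f hf (fun i hi => hfI i ⟨t, ht, hi⟩) hft

theorem jClosedSet_diagonal_iff : JClosedSet J (X × X) (diagonal X) ↔ JUnique J X := by
  refine ⟨fun hΔ I hI f g hf hg hfg => funext fun x => ?_, fun hU I hI Ψ hΨ hΨI => ?_⟩
  · induction x using WithTop.recTopCoe with
    | top => exact hΔ I hI _ (hf.prodMk hg) hfg
    | coe i => exact hfg i
  · exact congrFun (hU I hI _ _ (continuous_fst.comp hΨ) (continuous_snd.comp hΨ) hΨI) ⊤

theorem isClosed_jTop_diagonal_iff [WellFoundedLT J] :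
    IsClosed[jTop J (X × X)] (diagonal X) ↔ JUnique J X := by
  rw [← @isOpen_compl_iff (X × X) (diagonal X) (jTop J (X × X)), isOpen_jTop_iff, JOpenSet,
    compl_compl, jClosedSet_diagonal_iff]

end JClosed

section ClosedRange

variable {J : Type*} [LinearOrder J] [WellFoundedLT J] {X : Type*} [TopologicalSpace X]

theorem eq_of_isLUB_of_jClosedSet_diagonal (hΔ : JClosedSet J (X × X) (diagonal X))
    {I₁ I₂ : Set J} (hI₂ : AlmostClosed I₂) {f : WithTop I₁ → X} {h : WithTop I₂ → X}
    (hf : Continuous f) (hh : Continuous h) {A : Set (WithTop I₂)} {φ : WithTop I₂ → WithTop I₁}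
    (hAne : A.Nonempty) (hAmax : ∀ a ∈ A, ∃ a' ∈ A, a < a')
    (hAiso : ∀ a ∈ A, a ∉ closure (A ∩ Iio a)) (hφ : MonotoneOn φ A)
    (hagree : ∀ a ∈ A, h a = f (φ a)) {p : WithTop I₂} {c : WithTop I₁} (hp : IsLUB A p)
    (hc : IsLUB (φ '' A) c) : h p = f c := by
  have hpA : p ∉ A := fun hpA => let ⟨a, ha, hpa⟩ := hAmax p hpA; (hp.1 ha).not_gt hpa
  have hpcl : p ∈ closure A := hp.mem_closure hAne
  have hAD : A ⊆ closure A ∩ Iio p := fun a ha =>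
    ⟨subset_closure ha, (hp.1 ha).lt_of_ne (by rintro rfl; exact hpA ha)⟩
  have hdiff := closure_diff_closure_inter_Iio hpcl hpA
  obtain ⟨S, hS, e, he, hrange, hcl⟩ :=
    hI₂.exists_reindex (almostClosedIn_of_closure_diff (fun d hd => hd.2) hdiff)
  have hep : e ⊤ = p := singleton_eq_singleton_iff.1 (hcl.symm.trans hdiff)
  have hAe : A ⊆ range e := fun a ha =>
    let ⟨s, hs⟩ := hrange.superset (hAD ha)
    ⟨s, hs⟩
  have heA : range e ⊆ closure A := by
    rintro _ ⟨x, rfl⟩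
    induction x using WithTop.recTopCoe with
    | top => exact hep ▸ hpcl
    | coe s => exact (hrange.subset (mem_range_self s)).1
  obtain ⟨ψ, hψmono, hψA, hψ⟩ := hφ.exists_monotone_isLUB
  have hP : IsClosed ((fun s => (h (e s), f (ψ (e s)))) ⁻¹' diagonal X) :=
    hΔ.isClosed_preimage hS ((hh.comp he.continuous).prodMk
      (hf.comp (he.continuous_comp_of_leftIsolated hAe heA hAiso hψmono hψA hψ)))
  have htop : h (e ⊤) = f (ψ (e ⊤)) := hS.top_mem_of_isClosed hP fun s => by
    obtain ⟨a, ha, hsa⟩ := (lt_isLUB_iff hp).1 (hrange.subset (mem_range_self s)).2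
    obtain ⟨s', rfl⟩ : a ∈ range (fun s : S => e s) := hrange.superset (hAD ha)
    refine ⟨s', ?_, (he.strictMono.lt_iff_lt.1 hsa).le⟩
    show h (e s') = f (ψ (e s'))
    rw [hagree _ ha, hψA ha]
  rwa [hep, (hψ p).unique (by rwa [inter_eq_left.2 fun a ha => mem_Iic.2 (hp.1 ha)])] at htop

theorem top_mem_range_of_jClosedSet_diagonal [T1Space X]
    (hΔ : JClosedSet J (X × X) (diagonal X)) {I₁ I₂ : Set J} (hI₂ : AlmostClosed I₂)
    {f : WithTop I₁ → X} {h : WithTop I₂ → X} (hf : Continuous f) (hh : Continuous h)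
    (hsub : ∀ z : I₂, h z ∈ range f) : h ⊤ ∈ range f := by
  choose μ hμ using hsub
  obtain ⟨a0, ha0, hmin⟩ := wellFounded_lt.has_min {a | ∀ zb : I₂, ∃ z, zb < z ∧ μ z ≤ a}
    ⟨⊤, fun zb => let ⟨z, hz⟩ := hI₂.exists_gt zb; ⟨z, hz, le_top⟩⟩
  have hev : ∀ b < a0, ∃ u : I₂, ∀ z, u < z → b < μ z := fun b hb => by
    by_contra! hcon
    exact hmin b hcon hb
  have hfreq : ∀ zb : I₂, ∃ x ∈ h ⁻¹' {f a0}, (zb : WithTop I₂) < x := by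
    intro zb
    by_cases hz : ∃ z, zb < z ∧ μ z = a0
    · obtain ⟨z, hzb, hz⟩ := hz
      refine ⟨z, ?_, WithTop.coe_lt_coe.2 hzb⟩
      rw [mem_preimage, ← hμ z, hz, mem_singleton_iff]
    push Not at hz
    have hcof : ∀ b < a0, ∃ x, (zb : WithTop I₂) < x ∧ b < extendTop μ ⊤ x ∧
        extendTop μ ⊤ x < a0 := by
      intro b hb
      obtain ⟨u, hu⟩ := hev b hb
      obtain ⟨z, hz', hza⟩ := ha0 (max zb u)
      have hzb : zb < z := (le_max_left _ _).trans_lt hz'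
      exact ⟨z, WithTop.coe_lt_coe.2 hzb, hu z ((le_max_right _ _).trans_lt hz'),
        hza.lt_of_ne (hz z hzb)⟩
    have hlow : ∃ b, b < a0 := let ⟨z, hz', hza⟩ := ha0 zb; ⟨μ z, hza.lt_of_ne (hz z hz')⟩
    obtain ⟨A, hAzb, ⟨a, ha⟩, hAmax, hAiso, hφ, hc⟩ :=
      exists_isolated_monotoneOn_isLUB_image hlow hcof
    obtain ⟨p, hp⟩ := WellFoundedLT.exists_isLUB (OrderTop.bddAbove A)
    have hagree : ∀ a ∈ A, h a = f (extendTop μ ⊤ a) := fun a ha => by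
      obtain ⟨a', -, haa'⟩ := hAmax a ha
      lift a to I₂ using (haa'.trans_le le_top).ne
      exact (hμ a).symm
    exact ⟨p, eq_of_isLUB_of_jClosedSet_diagonal hΔ hI₂ hf hh ⟨a, ha⟩ hAmax hAiso hφ hagree hp hc,
      (hAzb ha).trans_le (hp.1 ha)⟩
  have := hI₂.nonempty_s19
  exact ⟨a0, (WithTop.top_mem_of_isClosed (isClosed_singleton.preimage hh) hfreq).symm⟩

end ClosedRange

section Equivalences

variable {J : Type*} [LinearOrder J] {X : Type*} [TopologicalSpace X]

theorem IsJConvergence.t1Space_of_jUnique (hX : IsJConvergence J X) (hU : JUnique J X) :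
    T1Space X :=
  ⟨fun x => by_contra fun hx =>
    let ⟨I, hI, f, hf, hfI, hft⟩ := hX _ hx
    hft (congrFun (hU I hI f (fun _ => x) hf continuous_const hfI) ⊤)⟩

theorem IsJConvergence.isClosed_range_of_jUnique [WellFoundedLT J] (hX : IsJConvergence J X)
    (hU : JUnique J X) {I : Set J} {f : WithTop I → X} (hf : Continuous f) :
    IsClosed (range f) := by
  have := hX.t1Space_of_jUnique hU
  by_contra hr
  obtain ⟨I₂, hI₂, h, hh, hhI, hht⟩ := hX _ hr
  exact hht (top_mem_range_of_jClosedSet_diagonal (jClosedSet_diagonal_iff.2 hU) hI₂ hf hh hhI)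

theorem t1Space_of_isClosed_range
    (hR : ∀ (I : Set J) (f : WithTop I → X), Continuous f → IsClosed (range f)) : T1Space X :=
  ⟨fun x => by simpa using hR ∅ (fun _ => x) continuous_const⟩

theorem isClosed_image_Ici {I : Set J} {f : WithTop I → X} (hf : Continuous f)
    (hR : ∀ g : WithTop I → X, Continuous g → IsClosed (range g)) (a : WithTop I) :
    IsClosed (f '' Ici a) := by
  convert hR (fun x => f (max x a)) (hf.comp (continuous_id.max continuous_const)) using 1
  ext y
  refine ⟨fun ⟨x, hx, hxy⟩ => ⟨x, by simp only [max_eq_left (mem_Ici.1 hx), hxy]⟩, ?_⟩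
  rintro ⟨x, rfl⟩
  exact ⟨_, le_max_right x a, rfl⟩

theorem eq_of_forall_mem_image_Ici [T1Space X] {I : Set J} (hI : AlmostClosed I)
    {f : WithTop I → X} (hf : Continuous f) {y : X} (hy : ∀ i : I, y ∈ f '' Ici ↑i) :
    f ⊤ = y :=
  hI.top_mem_of_isClosed (isClosed_singleton.preimage hf) fun i =>
    let ⟨x, hx, hfx⟩ := hy i
    ⟨x, hfx, hx⟩

theorem jUnique_of_isClosed_range
    (hR : ∀ (I : Set J) (f : WithTop I → X), Continuous f → IsClosed (range f)) :
    JUnique J X := by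
  have := t1Space_of_isClosed_range hR
  intro I hI f g hf hg hfg
  have hg : ∀ i : I, g ⊤ ∈ f '' Ici ↑i := fun i =>
    hI.top_mem_of_isClosed ((isClosed_image_Ici hf (hR I) i).preimage hg) fun j =>
      ⟨↑(max i j), ⟨_, WithTop.coe_le_coe.2 (le_max_left i j), hfg _⟩,
        WithTop.coe_le_coe.2 (le_max_right i j)⟩
  funext x
  induction x using WithTop.recTopCoe with
  | top => exact eq_of_forall_mem_image_Ici hI hf hg
  | coe i => exact hfg i

theorem IsJConvergence.isClosed_of_isCompact (hX : IsJConvergence J X)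
    (hR : ∀ (I : Set J) (f : WithTop I → X), Continuous f → IsClosed (range f)) {C : Set X}
    (hC : IsCompact C) : IsClosed C := by
  have := t1Space_of_isClosed_range hR
  by_contra hCcl
  obtain ⟨I, hI, f, hf, hfI, hft⟩ := hX C hCcl
  have := hI.nonempty_s19
  obtain ⟨y, hyC, hy⟩ := hC.inter_iInter_nonempty (fun i : I => f '' Ici ↑i)
    (fun i => isClosed_image_Ici hf (hR I) i) fun u => by
      obtain ⟨M, hM⟩ := u.exists_le
      exact ⟨f M, hfI M, mem_iInter₂.2 fun i hi => ⟨M, WithTop.coe_le_coe.2 (hM i hi), rfl⟩⟩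
  exact hft (eq_of_forall_mem_image_Ici hI hf (mem_iInter.1 hy) ▸ hyC)

end Equivalences

theorem stmt19_general {J : Type v} [LinearOrder J] [WellFoundedLT J] {X : Type u} [TopologicalSpace X]
    (hX : IsJConvergence J X) :
    List.TFAE
      [JUnique J X,
       ∀ C : Set X, IsCompact C → IsClosed C,
       ∀ (K : Type v) (tK : TopologicalSpace K), @CompactSpace K tK → @T2Space K tK →
         ∀ f : K → X, Continuous[tK, _] f → @IsClosedMap K X tK _ f,
       IsClosed[jTop J (X × X)] (Set.diagonal X)] := by
  tfae_have 1 → 2 := fun hU _ =>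
    hX.isClosed_of_isCompact fun _ _ hf => hX.isClosed_range_of_jUnique hU hf
  tfae_have 2 → 3 := fun hKC _ _ _ _ _ hf _ hA => hKC _ (hA.isCompact.image hf)
  tfae_have 3 → 1 := fun hWH => jUnique_of_isClosed_range fun I f hf => by
    simpa only [image_univ] using hWH _ _ inferInstance inferInstance f hf _ isClosed_univ
  tfae_have 1 ↔ 4 := isClosed_jTop_diagonal_iff.symm
  tfae_finish

theorem stmt19 {J : Type v} [LinearOrder J] [WellFoundedLT J] [TopologicalSpace J]
    [OrderTopology J] [NoncompactSpace J] {X : Type u} [TopologicalSpace X]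
    (hX : IsJConvergence J X) :
    List.TFAE
      [JUnique J X,
       ∀ C : Set X, IsCompact C → IsClosed C,
       ∀ (K : Type v) (tK : TopologicalSpace K), @CompactSpace K tK → @T2Space K tK →
         ∀ f : K → X, Continuous[tK, _] f → @IsClosedMap K X tK _ f,
       IsClosed[jTop J (X × X)] (Set.diagonal X)] :=
  stmt19_general hX
end
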